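/- arXiv:2408.09036 — 7 statements merged into one kernel-verified Lean document; each statement's English description precedes it below -/
import Mathlib

section
/- Let B and C be k-algebras and A = B ⊗ₖ C. Then the Lie commutator subspace satisfies [A, A] = B ⊗ [C, C] + [B, B] ⊗ C as k-subspaces of A. -/
open scoped TensorProduct

/-- The `k`-span of all Lie commutators `a*b - b*a` in a `k`-algebra `A`. -/
def commutatorSubmodule (k A : Type*) [CommSemiring k] [Ring A] [Algebra k A] :
    Submodule k A :=
  Submodule.span k {x : A | ∃ a b : A, x = a * b - b * a}

theorem comm_mem_aux {k A : Type*} [CommSemiring k] [Ring A] [Algebra k A] (a b : A) :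
    a * b - b * a ∈ commutatorSubmodule k A :=
  Submodule.subset_span ⟨a, b, rfl⟩

/-- For `k`-algebras `B` and `C` and `A = B ⊗ₖ C`, one has
`[A, A] = B ⊗ [C, C] + [B, B] ⊗ C` as `k`-subspaces of `A`. -/
theorem stmt2 (k B C : Type*) [Field k] [Ring B] [Ring C] [Algebra k B] [Algebra k C] :
    commutatorSubmodule k (B ⊗[k] C) =
      LinearMap.range (TensorProduct.map (⊤ : Submodule k B).subtype
        (commutatorSubmodule k C).subtype) ⊔
      LinearMap.range (TensorProduct.map (commutatorSubmodule k B).subtype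
        (⊤ : Submodule k C).subtype) := by
  set M := LinearMap.range (TensorProduct.map (⊤ : Submodule k B).subtype
        (commutatorSubmodule k C).subtype) ⊔
      LinearMap.range (TensorProduct.map (commutatorSubmodule k B).subtype
        (⊤ : Submodule k C).subtype) with hM
  apply le_antisymm
  · rw [commutatorSubmodule]
    apply Submodule.span_le.2
    rintro x ⟨a, b, rfl⟩
    simp only [Set.mem_setOf_eq, SetLike.mem_coe]
    induction a using TensorProduct.induction_on with
    | zero => simpa using M.zero_mem
    | add a₁ a₂ h₁ h₂ =>
      have : (a₁ + a₂) * b - b * (a₁ + a₂) = (a₁ * b - b * a₁) + (a₂ * b - b * a₂) := by noncomm_ring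
      rw [this]; exact M.add_mem h₁ h₂
    | tmul b₁ c₁ =>
      induction b using TensorProduct.induction_on with
      | zero => simpa using M.zero_mem
      | add x₁ x₂ h₁ h₂ =>
        have : (b₁ ⊗ₜ[k] c₁) * (x₁ + x₂) - (x₁ + x₂) * (b₁ ⊗ₜ[k] c₁) =
            ((b₁ ⊗ₜ[k] c₁) * x₁ - x₁ * (b₁ ⊗ₜ[k] c₁)) +
            ((b₁ ⊗ₜ[k] c₁) * x₂ - x₂ * (b₁ ⊗ₜ[k] c₁)) := by noncomm_ring
        rw [this]; exact M.add_mem h₁ h₂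
      | tmul b₂ c₂ =>
        rw [Algebra.TensorProduct.tmul_mul_tmul, Algebra.TensorProduct.tmul_mul_tmul]
        have key : (b₁ * b₂) ⊗ₜ[k] (c₁ * c₂) - (b₂ * b₁) ⊗ₜ[k] (c₂ * c₁) =
            (b₁ * b₂) ⊗ₜ[k] (c₁ * c₂ - c₂ * c₁) + (b₁ * b₂ - b₂ * b₁) ⊗ₜ[k] (c₂ * c₁) := by
          rw [TensorProduct.tmul_sub, TensorProduct.sub_tmul]
          abel
        rw [key]
        refine M.add_mem ?_ ?_
        · exact le_sup_left (α := Submodule k (B ⊗[k] C))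
            ⟨⟨b₁ * b₂, trivial⟩ ⊗ₜ ⟨c₁ * c₂ - c₂ * c₁, comm_mem_aux _ _⟩, by
              simp [TensorProduct.map_tmul]⟩
        · exact le_sup_right (α := Submodule k (B ⊗[k] C))
            ⟨⟨b₁ * b₂ - b₂ * b₁, comm_mem_aux _ _⟩ ⊗ₜ ⟨c₂ * c₁, trivial⟩, by
              simp [TensorProduct.map_tmul]⟩
  · refine sup_le ?_ ?_
    · rintro x ⟨y, rfl⟩
      induction y using TensorProduct.induction_on with
      | zero => simpa using (commutatorSubmodule k (B ⊗[k] C)).zero_mem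
      | add y₁ y₂ h₁ h₂ =>
        rw [map_add]; exact Submodule.add_mem _ h₁ h₂
      | tmul p q =>
        obtain ⟨b, -⟩ := p
        obtain ⟨z, hz⟩ := q
        simp only [TensorProduct.map_tmul, Submodule.coe_subtype]
        induction hz using Submodule.span_induction with
        | mem w hw =>
          obtain ⟨c, c', rfl⟩ := hw
          have : b ⊗ₜ[k] (c * c' - c' * c) =
              (b ⊗ₜ[k] c) * ((1 : B) ⊗ₜ[k] c') - ((1 : B) ⊗ₜ[k] c') * (b ⊗ₜ[k] c) := by
            rw [Algebra.TensorProduct.tmul_mul_tmul, Algebra.TensorProduct.tmul_mul_tmul,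
              TensorProduct.tmul_sub, mul_one, one_mul]
          rw [this]
          exact comm_mem_aux _ _
        | zero => simpa using (commutatorSubmodule k (B ⊗[k] C)).zero_mem
        | add u v hu hv hu' hv' =>
          rw [TensorProduct.tmul_add]; exact Submodule.add_mem _ hu' hv'
        | smul t u hu hu' =>
          rw [TensorProduct.tmul_smul]; exact Submodule.smul_mem _ t hu'
    · rintro x ⟨y, rfl⟩
      induction y using TensorProduct.induction_on with
      | zero => simpa using (commutatorSubmodule k (B ⊗[k] C)).zero_mem
      | add y₁ y₂ h₁ h₂ =>
        rw [map_add]; exact Submodule.add_mem _ h₁ h₂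
      | tmul p q =>
        obtain ⟨z, hz⟩ := p
        obtain ⟨c, -⟩ := q
        simp only [TensorProduct.map_tmul, Submodule.coe_subtype]
        induction hz using Submodule.span_induction with
        | mem w hw =>
          obtain ⟨b, b', rfl⟩ := hw
          have : (b * b' - b' * b) ⊗ₜ[k] c =
              (b ⊗ₜ[k] (1 : C)) * (b' ⊗ₜ[k] c) - (b' ⊗ₜ[k] c) * (b ⊗ₜ[k] (1 : C)) := by
            rw [Algebra.TensorProduct.tmul_mul_tmul, Algebra.TensorProduct.tmul_mul_tmul,
              TensorProduct.sub_tmul, mul_one, one_mul]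
          rw [this]
          exact comm_mem_aux _ _
        | zero => simpa using (commutatorSubmodule k (B ⊗[k] C)).zero_mem
        | add u v hu hv hu' hv' =>
          rw [TensorProduct.add_tmul]; exact Submodule.add_mem _ hu' hv'
        | smul t u hu hu' =>
          rw [← TensorProduct.smul_tmul']; exact Submodule.smul_mem _ t hu'
end

section
/- Let A be an augmented k-algebra over a field k of characteristic p whose augmentation ideal I(A) is nilpotent. Then V(A) = (1 + I(A)) ∩ U(A) is a finite p-group (assuming A finite-dimensional), and its exponent equals p^s where s is the smallest non-negative integer such that a^{p^s} = 0 for all a ∈ I(A). -/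
/-- Let `A` be a finite-dimensional augmented `k`-algebra (augmentation `ε`,
augmentation ideal `I(A) = ker ε`) over a field `k` of characteristic `p`, with `I(A)`
nilpotent. Then `V(A) = U(A) ∩ (1 + I(A))` is a `p`-group of exponent `p^s`, where `s`
is the smallest non-negative integer with `a^(p^s) = 0` for all `a ∈ I(A)`. -/
theorem stmt4 (k A : Type*) [Field k] (p : ℕ) [Fact p.Prime] [CharP k p]
    [Ring A] [Algebra k A] [FiniteDimensional k A]
    (ε : A →ₐ[k] k)
    (hnil : IsNilpotent ((RingHom.ker ε).restrictScalars k))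
    (V : Subgroup Aˣ)
    (hV : ∀ u : Aˣ, u ∈ V ↔ (u : A) - 1 ∈ RingHom.ker ε)
    (s : ℕ)
    (hs : ∀ a ∈ RingHom.ker ε, a ^ p ^ s = 0)
    (hmin : ∀ t < s, ∃ a ∈ RingHom.ker ε, a ^ p ^ t ≠ 0) :
    IsPGroup p V ∧ Monoid.exponent V = p ^ s := by
  have hinj : Function.Injective (algebraMap k A) := by
    intro x y hxy
    have := congrArg ε hxy
    simpa using this
  have hchar : CharP A p := charP_of_injective_algebraMap hinj p
  -- every element of V has order dividing p^s
  have key : ∀ g : V, g ^ p ^ s = 1 := by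
    intro g
    have h1 : ((g : Aˣ) : A) - 1 ∈ RingHom.ker ε := (hV _).1 g.2
    have h2 : (((g : Aˣ) : A) - 1) ^ p ^ s = 0 := hs _ h1
    have h3 : (((g : Aˣ) : A)) ^ p ^ s = 1 := by
      have := add_pow_char_pow_of_commute (p := p) (n := s)
        (Commute.one_right (((g : Aˣ) : A) - 1))
      simpa [h2] using this
    ext
    push_cast
    exact h3
  have hps_pos : 0 < p ^ s := pow_pos (Fact.out : p.Prime).pos s
  constructor
  · intro g
    exact ⟨s, key g⟩
  · have hdvd : Monoid.exponent V ∣ p ^ s :=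
      Monoid.exponent_dvd_of_forall_pow_eq_one key
    obtain ⟨t, ht, hexp⟩ := (Nat.dvd_prime_pow (Fact.out : p.Prime)).1 hdvd
    rcases lt_or_eq_of_le ht with hlt | heq
    · exfalso
      obtain ⟨a, ha, hat⟩ := hmin t hlt
      have has : a ^ p ^ s = 0 := hs a ha
      -- 1 + a is a unit
      have hpow : ∀ n : ℕ, (1 + a) ^ p ^ n = 1 + a ^ p ^ n := by
        intro n
        have := add_pow_char_pow_of_commute (p := p) (n := n) (Commute.one_left a)
        simpa using this
      have hunit : (1 + a) * (1 + a) ^ (p ^ s - 1) = 1 := by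
        rw [← pow_succ']
        rw [Nat.sub_add_cancel hps_pos]
        rw [hpow s, has, add_zero]
      have hunit' : (1 + a) ^ (p ^ s - 1) * (1 + a) = 1 := by
        rw [← pow_succ, Nat.sub_add_cancel hps_pos, hpow s, has, add_zero]
      set u : Aˣ := ⟨1 + a, (1 + a) ^ (p ^ s - 1), hunit, hunit'⟩ with hu
      have huV : u ∈ V := by
        rw [hV]
        simpa [hu] using ha
      have : (⟨u, huV⟩ : V) ^ p ^ t = 1 := by
        rw [← hexp]
        exact Monoid.pow_exponent_eq_one _
      have hA : (1 + a) ^ p ^ t = 1 := by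
        have := congrArg (fun x : V => ((x : Aˣ) : A)) this
        push_cast at this
        simpa [hu] using this
      rw [hpow t] at hA
      apply hat
      have : (1 : A) + a ^ p ^ t = 1 + 0 := by simpa using hA
      exact add_left_cancel this
    · rw [hexp, heq]
end

section
/- Let G be a finite p-group, k a field of characteristic p, and i ≥ 1. Then I(℧_i(G)·G')·kG = ℧_i(I(G))·kG + I(G')·kG, where ℧_i(G) = ⟨g^{p^i} : g ∈ G⟩, G' is the derived subgroup, and ℧_i(I(G)) is the subalgebra of I(G) generated by elements a^{p^i} with a ∈ I(G). -/
/-- The right ideal of an algebra `A` generated by a subset `S`. -/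
def rightIdealSpan (k : Type*) {A : Type*} [CommSemiring k] [Semiring A] [Algebra k A]
    (S : Set A) : Submodule k A :=
  Submodule.span k {x : A | ∃ s ∈ S, ∃ a : A, x = s * a}

/-- The augmentation map of a group algebra. -/
noncomputable def augmentation (k G : Type*) [CommSemiring k] [Group G] :
    MonoidAlgebra k G →ₐ[k] k :=
  MonoidAlgebra.lift k k G 1

/-- `℧_n(G)`: the subgroup generated by the `n`-th powers. -/
def mhoPow (G : Type*) [Group G] (n : ℕ) : Subgroup G :=
  Subgroup.closure {x : G | ∃ g : G, x = g ^ n}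

section RightIdeal

variable (k : Type*) {A : Type*} [CommSemiring k] [Semiring A] [Algebra k A]

theorem mem_rightIdealSpan_of_mem {S : Set A} {s : A} (hs : s ∈ S) :
    s ∈ rightIdealSpan k S :=
  Submodule.subset_span ⟨s, hs, 1, (mul_one s).symm⟩

theorem rightIdealSpan_mul_mem {S : Set A} {x : A} (hx : x ∈ rightIdealSpan k S) (a : A) :
    x * a ∈ rightIdealSpan k S := by
  induction hx using Submodule.span_induction with
  | mem y hy =>
    obtain ⟨s, hs, b, rfl⟩ := hy
    exact Submodule.subset_span ⟨s, hs, b * a, mul_assoc _ _ _⟩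
  | zero => simpa using (rightIdealSpan k S).zero_mem
  | add x y _ _ hx hy => rw [add_mul]; exact add_mem hx hy
  | smul c x _ hx => rw [smul_mul_assoc]; exact Submodule.smul_mem _ _ hx

theorem rightIdealSpan_mono {S T : Set A} (h : S ⊆ T) :
    rightIdealSpan k S ≤ rightIdealSpan k T :=
  Submodule.span_mono fun _x hx => by
    obtain ⟨s, hs, a, rfl⟩ := hx
    exact ⟨s, h hs, a, rfl⟩

end RightIdeal

section GroupAlg

variable {k : Type*} [CommRing k] {G : Type*} [Group G]

theorem of_sub_one_mul (g h : G) :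
    (MonoidAlgebra.of k G g - 1) * MonoidAlgebra.of k G h =
      MonoidAlgebra.of k G (g * h) - MonoidAlgebra.of k G h := by
  rw [sub_mul, one_mul, ← map_mul]

theorem monoidAlgebra_decomp (x : MonoidAlgebra k G) :
    x = ∑ g ∈ x.coeff.support, x.coeff g • MonoidAlgebra.of k G g := by
  conv_lhs => rw [← MonoidAlgebra.sum_coeff_single x]
  rw [Finsupp.sum]
  refine Finset.sum_congr rfl fun g _ => ?_
  rw [MonoidAlgebra.of_apply, MonoidAlgebra.smul_single', mul_one]

theorem augmentation_apply (x : MonoidAlgebra k G) :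
    augmentation k G x = ∑ g ∈ x.coeff.support, x.coeff g := by
  rw [augmentation, MonoidAlgebra.lift_apply, Finsupp.sum]
  simp

theorem augmentation_of (g : G) : augmentation k G (MonoidAlgebra.of k G g) = 1 := by
  rw [augmentation, MonoidAlgebra.lift_of]
  rfl

/-- Kernel of the map to the quotient group algebra lands in the right ideal. -/
theorem ker_mapDomain_le (H : Subgroup G) [H.Normal] {x : MonoidAlgebra k G}
    (hx : MonoidAlgebra.mapDomain (QuotientGroup.mk (s := H)) x = 0) :
    x ∈ rightIdealSpan k {y : MonoidAlgebra k G | ∃ n ∈ H, y = MonoidAlgebra.of k G n - 1} := by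
  classical
  set r : G → G := fun g => ((QuotientGroup.mk g : G ⧸ H)).out with hr
  have hmem : ∀ g : G, g * (r g)⁻¹ ∈ H := by
    intro g
    rw [← QuotientGroup.eq_one_iff, QuotientGroup.mk_mul, QuotientGroup.mk_inv]
    simp [hr, QuotientGroup.out_eq']
  have key : x = ∑ g ∈ x.coeff.support, x.coeff g •
      ((MonoidAlgebra.of k G (g * (r g)⁻¹) - 1) * MonoidAlgebra.of k G (r g)) := by
    have h2 : ∑ g ∈ x.coeff.support, x.coeff g • MonoidAlgebra.of k G (r g) = 0 := by
      have hm : MonoidAlgebra.mapDomain r x = (0 : MonoidAlgebra k G) := by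
        have hc : r = (fun q : G ⧸ H => q.out) ∘ (QuotientGroup.mk (s := H)) := rfl
        have hx' := congrArg MonoidAlgebra.coeff hx
        simp only [MonoidAlgebra.coeff_mapDomain, MonoidAlgebra.coeff_zero] at hx'
        rw [hc, MonoidAlgebra.mapDomain, Finsupp.mapDomain_comp, hx', Finsupp.mapDomain_zero,
          MonoidAlgebra.ofCoeff_zero]
      calc ∑ g ∈ x.coeff.support, x.coeff g • MonoidAlgebra.of k G (r g)
          = MonoidAlgebra.mapDomain r x := by
            rw [MonoidAlgebra.mapDomain, Finsupp.mapDomain, Finsupp.sum, MonoidAlgebra.ofCoeff_sum]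
            refine Finset.sum_congr rfl fun g _ => ?_
            rw [MonoidAlgebra.ofCoeff_single, MonoidAlgebra.of_apply, MonoidAlgebra.smul_single', mul_one]
        _ = 0 := hm
    calc x = ∑ g ∈ x.coeff.support, x.coeff g • MonoidAlgebra.of k G g := monoidAlgebra_decomp x
      _ = ∑ g ∈ x.coeff.support, (x.coeff g •
            ((MonoidAlgebra.of k G (g * (r g)⁻¹) - 1) * MonoidAlgebra.of k G (r g))
          + x.coeff g • MonoidAlgebra.of k G (r g)) := by
          refine Finset.sum_congr rfl fun g _ => ?_
          rw [← smul_add, of_sub_one_mul, inv_mul_cancel_right, sub_add_cancel]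
      _ = _ := by rw [Finset.sum_add_distrib, h2, add_zero]
  rw [key]
  refine Submodule.sum_mem _ fun g _ => Submodule.smul_mem _ _ ?_
  exact Submodule.subset_span ⟨_, ⟨g * (r g)⁻¹, hmem g, rfl⟩, _, rfl⟩

end GroupAlg

/-- For a finite `p`-group `G`, a field `k` of characteristic `p` and `i ≥ 1`,
`I(℧_i(G)·G')·kG = ℧_i(I(G))·kG + I(G')·kG`. -/
theorem stmt7 (k : Type*) [Field k] (p : ℕ) [Fact p.Prime] [CharP k p]
    (G : Type*) [Group G] [Finite G] (hG : IsPGroup p G) (i : ℕ) (hi : 1 ≤ i) :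
    rightIdealSpan k {x : MonoidAlgebra k G |
        ∃ n ∈ mhoPow G (p ^ i) ⊔ commutator G, x = MonoidAlgebra.of k G n - 1} =
      rightIdealSpan k
        (NonUnitalAlgebra.adjoin k {x : MonoidAlgebra k G |
          ∃ a ∈ RingHom.ker (augmentation k G), x = a ^ p ^ i} : Set (MonoidAlgebra k G)) ⊔
      rightIdealSpan k {x : MonoidAlgebra k G |
        ∃ n ∈ commutator G, x = MonoidAlgebra.of k G n - 1} := by
  classical
  set N : Subgroup G := mhoPow G (p ^ i) ⊔ commutator G with hN
  set Q := Abelianization G with hQ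
  haveI hCQ : CharP (MonoidAlgebra k Q) p :=
    charP_of_injective_algebraMap (R := k)
      (fun a b hab => by
        have := congrArg (fun z : MonoidAlgebra k Q => z.coeff 1) hab
        simpa [MonoidAlgebra.coe_algebraMap] using this) p
  haveI hCG : CharP (MonoidAlgebra k G) p :=
    charP_of_injective_algebraMap (R := k)
      (fun a b hab => by
        have := congrArg (fun z : MonoidAlgebra k G => z.coeff 1) hab
        simpa [MonoidAlgebra.coe_algebraMap] using this) p
  set LHS := rightIdealSpan k {x : MonoidAlgebra k G |
      ∃ n ∈ N, x = MonoidAlgebra.of k G n - 1} with hLHS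
  set A := rightIdealSpan k
      (NonUnitalAlgebra.adjoin k {x : MonoidAlgebra k G |
        ∃ a ∈ RingHom.ker (augmentation k G), x = a ^ p ^ i} : Set (MonoidAlgebra k G)) with hA
  set B := rightIdealSpan k {x : MonoidAlgebra k G |
      ∃ n ∈ commutator G, x = MonoidAlgebra.of k G n - 1} with hB
  have hsubset : {x : MonoidAlgebra k G | ∃ n ∈ commutator G, x = MonoidAlgebra.of k G n - 1}
      ⊆ {x : MonoidAlgebra k G | ∃ n ∈ N, x = MonoidAlgebra.of k G n - 1} :=
    fun x ⟨n, hn, hx⟩ => ⟨n, (le_sup_right : commutator G ≤ N) hn, hx⟩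
  -- key membership
  have key : ∀ a : MonoidAlgebra k G, a ∈ RingHom.ker (augmentation k G) →
      a ^ p ^ i ∈ LHS := by
    intro a ha
    set π : MonoidAlgebra k G →ₐ[k] MonoidAlgebra k Q :=
      MonoidAlgebra.mapDomainAlgHom k k (Abelianization.of (G := G)) with hπ
    have hπ_apply : ∀ x : MonoidAlgebra k G,
        π x = MonoidAlgebra.mapDomain (⇑(Abelianization.of (G := G))) x := fun x => rfl
    have hπ_of : ∀ g : G, π (MonoidAlgebra.of k G g)
        = MonoidAlgebra.of k Q (Abelianization.of g) := by
      intro g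
      rw [hπ_apply]
      exact MonoidAlgebra.mapDomain_single
    set b : MonoidAlgebra k G :=
      ∑ g ∈ a.coeff.support, (a.coeff g) ^ p ^ i • (MonoidAlgebra.of k G (g ^ p ^ i) - 1) with hb
    have hbmem : b ∈ LHS := by
      refine Submodule.sum_mem _ fun g _ => Submodule.smul_mem _ _ ?_
      refine mem_rightIdealSpan_of_mem k ⟨g ^ p ^ i, ?_, rfl⟩
      exact Subgroup.mem_sup_left (Subgroup.subset_closure ⟨g, rfl⟩)
    have hsum : ∑ g ∈ a.coeff.support, a.coeff g = 0 := by
      rw [← augmentation_apply]; exact ha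
    have hπa : π a = ∑ g ∈ a.coeff.support,
        a.coeff g • (MonoidAlgebra.of k Q (Abelianization.of g) - 1) := by
      conv_lhs => rw [monoidAlgebra_decomp a]
      rw [map_sum]
      have step : ∀ g ∈ a.coeff.support, π (a.coeff g • MonoidAlgebra.of k G g)
          = a.coeff g • (MonoidAlgebra.of k Q (Abelianization.of g) - 1) + a.coeff g • (1 : MonoidAlgebra k Q) := by
        intro g _
        rw [map_smul, hπ_of, smul_sub, sub_add_cancel]
      rw [Finset.sum_congr rfl step, Finset.sum_add_distrib, ← Finset.sum_smul, hsum,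
        zero_smul, add_zero]
    have hz : MonoidAlgebra.mapDomain (QuotientGroup.mk (s := commutator G)) (a ^ p ^ i - b) = 0 := by
      have : π (a ^ p ^ i - b) = 0 := by
        rw [map_sub, map_pow, hπa, hb, map_sum, sum_pow_char_pow, sub_eq_zero]
        refine Finset.sum_congr rfl fun g _ => ?_
        rw [smul_pow, sub_pow_char_pow, one_pow, map_smul, map_sub, map_one, hπ_of]
        simp only [map_pow]
      rw [hπ_apply] at this
      exact this
    have hker := ker_mapDomain_le (commutator G) hz
    rw [← sub_add_cancel (a ^ p ^ i) b]
    exact add_mem (rightIdealSpan_mono k hsubset hker) hbmem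
  -- closure under right multiplication for A ⊔ B
  have hRmul : ∀ x ∈ A ⊔ B, ∀ c : MonoidAlgebra k G, x * c ∈ A ⊔ B := by
    intro x hx c
    obtain ⟨y, hy, z, hz, rfl⟩ := Submodule.mem_sup.mp hx
    rw [add_mul]
    exact Submodule.add_mem_sup (rightIdealSpan_mul_mem k hy c) (rightIdealSpan_mul_mem k hz c)
  apply le_antisymm
  · -- LHS ≤ A ⊔ B
    have hNgen : N = Subgroup.closure
        ({x : G | ∃ g : G, x = g ^ p ^ i} ∪ (commutator G : Set G)) := by
      rw [Subgroup.closure_union, Subgroup.closure_eq, hN, mhoPow]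
    have claim : ∀ n ∈ N, MonoidAlgebra.of k G n - 1 ∈ A ⊔ B := by
      intro n hn
      rw [hNgen] at hn
      induction hn using Subgroup.closure_induction with
      | mem x hx =>
        rcases hx with hx | hx
        · obtain ⟨g, rfl⟩ := hx
          have h1 : MonoidAlgebra.of k G (g ^ p ^ i) - 1
              = (MonoidAlgebra.of k G g - 1) ^ p ^ i := by
            rw [sub_pow_char_pow_of_commute p i (Commute.one_right _), one_pow, map_pow]
          rw [h1]
          refine le_sup_left (α := Submodule k (MonoidAlgebra k G)) ?_
          refine mem_rightIdealSpan_of_mem k ?_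
          refine NonUnitalAlgebra.subset_adjoin k ⟨MonoidAlgebra.of k G g - 1, ?_, rfl⟩
          rw [RingHom.mem_ker, map_sub, map_one, augmentation_of, sub_self]
        · exact le_sup_right (α := Submodule k (MonoidAlgebra k G))
            (mem_rightIdealSpan_of_mem k ⟨x, hx, rfl⟩)
      | one => rw [map_one, sub_self]; exact zero_mem _
      | mul x y _ _ hx hy =>
        have : MonoidAlgebra.of k G (x * y) - 1
            = (MonoidAlgebra.of k G x - 1) * MonoidAlgebra.of k G y
              + (MonoidAlgebra.of k G y - 1) := by
          rw [of_sub_one_mul]; abel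
        rw [this]
        exact add_mem (hRmul _ hx _) hy
      | inv x _ hx =>
        have : MonoidAlgebra.of k G x⁻¹ - 1
            = -((MonoidAlgebra.of k G x - 1) * MonoidAlgebra.of k G x⁻¹) := by
          rw [of_sub_one_mul, mul_inv_cancel, map_one]; abel
        rw [this]
        exact neg_mem (hRmul _ hx _)
    rw [hLHS, rightIdealSpan]
    rw [Submodule.span_le]
    rintro x ⟨s, ⟨n, hn, rfl⟩, c, rfl⟩
    exact hRmul _ (claim n hn) c
  · -- A ⊔ B ≤ LHS
    refine sup_le ?_ (rightIdealSpan_mono k hsubset)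
    rw [hA, rightIdealSpan, Submodule.span_le]
    rintro x ⟨s, hs, c, rfl⟩
    refine rightIdealSpan_mul_mem k ?_ c
    induction hs using NonUnitalAlgebra.adjoin_induction with
    | mem x hx =>
      obtain ⟨a, ha, rfl⟩ := hx
      exact key a ha
    | add x y _ _ hx hy => exact add_mem hx hy
    | zero => exact zero_mem _
    | mul x y _ _ hx hy => exact rightIdealSpan_mul_mem k hx y
    | smul r x _ hx => exact Submodule.smul_mem _ _ hx
end

section
/- Let G be a finite p-group and k a field of characteristic p. Then G has a cyclic direct factor of order p^i if and only if the group 1 + I(R_i(G))·k(G/℧_i(G)G') has exponent at least p^i, where R_i(G) = Ω_i(Z(G))℧_i(G)G' / ℧_i(G)G'. -/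
/-- `Ω_i(Z(G))`: the subgroup generated by the central elements of order dividing `n`. -/
def omegaCenter (G : Type*) [Group G] (n : ℕ) : Subgroup G :=
  Subgroup.closure {z : G | z ∈ Subgroup.center G ∧ z ^ n = 1}

section Helpers

/-- Every element of `Multiplicative (ZMod n)` is a power of `ofAdd 1`. -/
lemma multZMod_gen_pow {n : ℕ} [NeZero n] (t : Multiplicative (ZMod n)) :
    ∃ v : ℕ, (Multiplicative.ofAdd (1 : ZMod n)) ^ v = t := by
  refine ⟨(Multiplicative.toAdd t).val, ?_⟩
  rw [← ofAdd_nsmul, nsmul_eq_mul, mul_one]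
  rw [ZMod.natCast_rightInverse (Multiplicative.toAdd t)]
  exact ofAdd_toAdd t

/-- A split surjection onto a commutative group with central image of the splitting
gives a direct product decomposition. -/
lemma retraction_equiv {G K : Type*} [Group G] [CommGroup K] (ψ : G →* K) (σ : K →* G)
    (hret : ∀ t, ψ (σ t) = t) (hcent : ∀ (t : K) (y : G), Commute (σ t) y) :
    Nonempty (G ≃* K × ψ.ker) := by
  let φ : K × ψ.ker →* G := σ.noncommCoprod ψ.ker.subtype (fun t h => hcent t h)
  have hφ : ∀ (t : K) (h : ψ.ker), φ (t, h) = σ t * (h : G) := fun t h => rfl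
  have hbij : Function.Bijective φ := by
    constructor
    · rw [injective_iff_map_eq_one]
      rintro ⟨t, h⟩ hth
      rw [hφ] at hth
      have hhk : ψ (h : G) = 1 := h.2
      have ht : t = 1 := by
        have h2 := congrArg ψ hth
        rwa [map_mul, hret, hhk, mul_one, map_one] at h2
      have hh : (h : G) = 1 := by rwa [ht, map_one, one_mul] at hth
      exact Prod.ext ht (Subtype.ext hh)
    · intro x
      have hker : (σ (ψ x))⁻¹ * x ∈ ψ.ker := by
        rw [MonoidHom.mem_ker, map_mul, map_inv, hret, inv_mul_eq_one]
      refine ⟨(ψ x, ⟨(σ (ψ x))⁻¹ * x, hker⟩), ?_⟩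
      rw [hφ]
      exact mul_inv_cancel_left _ _
  exact ⟨(MulEquiv.ofBijective φ hbij).symm⟩

/-- Elements of `omegaCenter G n` are central and of order dividing `n`. -/
lemma omegaCenter_spec {G : Type*} [Group G] (n : ℕ) {g : G} (hg : g ∈ omegaCenter G n) :
    g ∈ Subgroup.center G ∧ g ^ n = 1 := by
  let T : Subgroup G :=
    { carrier := {z : G | z ∈ Subgroup.center G ∧ z ^ n = 1}
      one_mem' := ⟨Subgroup.one_mem _, one_pow n⟩
      mul_mem' := by
        rintro a b ⟨ha, ha1⟩ ⟨hb, hb1⟩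
        refine ⟨Subgroup.mul_mem _ ha hb, ?_⟩
        have hc : Commute a b := ((Subgroup.mem_center_iff.mp ha) b).symm
        rw [hc.mul_pow, ha1, hb1, one_mul]
      inv_mem' := by
        rintro a ⟨ha, ha1⟩
        exact ⟨Subgroup.inv_mem _ ha, by rw [inv_pow, ha1, inv_one]⟩ }
  have hT : omegaCenter G n ≤ T := (Subgroup.closure_le T).mpr (fun z hz => hz)
  exact hT hg

end Helpers

/-- A finite `p`-group `G` has a cyclic direct factor of order `p^i` if and
only if the group `1 + I(R_i(G))·k(G/℧_i(G)G')` has exponent at least `p^i`, where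
`R_i(G) = Ω_i(Z(G))℧_i(G)G'/℧_i(G)G'`. -/
theorem stmt11 (k : Type*) [Field k] (p : ℕ) [Fact p.Prime] [CharP k p]
    (G : Type*) [Group G] [Finite G] (hG : IsPGroup p G) (i : ℕ) (hi : 1 ≤ i)
    (N : Subgroup G) (hN : N = mhoPow G (p ^ i) ⊔ commutator G) [N.Normal] :
    (∃ H : Subgroup G, Nonempty (G ≃* Multiplicative (ZMod (p ^ i)) × H)) ↔
      ∃ x ∈ rightIdealSpan k {y : MonoidAlgebra k (G ⧸ N) |
          ∃ m ∈ Subgroup.map (QuotientGroup.mk' N) (omegaCenter G (p ^ i)),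
            y = MonoidAlgebra.of k (G ⧸ N) m - 1},
        p ^ i ≤ orderOf (1 + x) := by
  have hp : p.Prime := Fact.out
  haveI : NeZero (p ^ i) := ⟨pow_ne_zero _ hp.ne_zero⟩
  have hqlt : p ^ (i - 1) < p ^ i := Nat.pow_lt_pow_right hp.one_lt (by omega)
  have hq0 : p ^ (i - 1) ≠ 0 := pow_ne_zero _ hp.ne_zero
  constructor
  · rintro ⟨H, ⟨e⟩⟩
    let K := Multiplicative (ZMod (p ^ i))
    let f : G →* K := (MonoidHom.fst K H).comp e.toMonoidHom
    have hKpow : ∀ t : K, t ^ (p ^ i) = 1 := by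
      intro t
      have h0 : (p ^ i) • Multiplicative.toAdd t = 0 := by
        rw [nsmul_eq_mul]
        rw [show ((p ^ i : ℕ) : ZMod (p ^ i)) = 0 from ZMod.natCast_self _, zero_mul]
      calc t ^ (p ^ i) = Multiplicative.ofAdd ((p ^ i) • Multiplicative.toAdd t) := by
            rw [ofAdd_nsmul, ofAdd_toAdd]
        _ = 1 := by rw [h0, ofAdd_zero]
    have hfN : N ≤ f.ker := by
      rw [hN, sup_le_iff]
      constructor
      · rw [mhoPow, Subgroup.closure_le]
        rintro x ⟨y, rfl⟩
        simp only [SetLike.mem_coe, MonoidHom.mem_ker, map_pow]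
        exact hKpow (f y)
      · exact Abelianization.commutator_subset_ker f
    set g := e.symm (Multiplicative.ofAdd (1 : ZMod (p ^ i)), 1) with hgdef
    have hge : e g = (Multiplicative.ofAdd (1 : ZMod (p ^ i)), 1) := e.apply_symm_apply _
    have hgc : g ∈ Subgroup.center G := by
      rw [Subgroup.mem_center_iff]
      intro y
      apply e.injective
      rw [map_mul, map_mul, hge]
      exact Prod.ext (mul_comm _ _) (by simp)
    have hgp : g ^ (p ^ i) = 1 := by
      apply e.injective
      rw [map_pow, hge]
      rw [show (e 1 : K × ↥H) = 1 from map_one e]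
      simp [Prod.ext_iff, Prod.pow_fst, Prod.pow_snd, hKpow]
    have hgΩ : g ∈ omegaCenter G (p ^ i) := Subgroup.subset_closure ⟨hgc, hgp⟩
    have hfg : f g = Multiplicative.ofAdd (1 : ZMod (p ^ i)) := by
      show (e g).1 = _
      rw [hge]
    have hpne : (Multiplicative.ofAdd (1 : ZMod (p ^ i))) ^ (p ^ (i - 1)) ≠ 1 := by
      rw [← ofAdd_nsmul, nsmul_eq_mul, mul_one]
      intro hcon
      rw [show (1 : K) = Multiplicative.ofAdd (0 : ZMod (p ^ i)) from rfl] at hcon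
      have h3 := Multiplicative.ofAdd.injective hcon
      rw [ZMod.natCast_eq_zero_iff] at h3
      have := Nat.le_of_dvd (Nat.pos_of_ne_zero hq0) h3
      omega
    have hgN : g ^ (p ^ (i - 1)) ∉ N := by
      intro hmem
      apply hpne
      have := hfN hmem
      rwa [MonoidHom.mem_ker, map_pow, hfg] at this
    set m : G ⧸ N := (QuotientGroup.mk' N) g with hmdef
    have hm1 : m ^ (p ^ i) = 1 := by rw [hmdef, ← map_pow, hgp, map_one]
    have hm2 : m ^ (p ^ (i - 1)) ≠ 1 := by
      intro hcon
      apply hgN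
      rw [hmdef, ← map_pow] at hcon
      exact (QuotientGroup.eq_one_iff _).mp hcon
    have hmord : orderOf m = p ^ i := by
      have h := orderOf_eq_prime_pow (p := p) (n := i - 1) hm2
        (by rwa [Nat.sub_add_cancel hi])
      rwa [Nat.sub_add_cancel hi] at h
    refine ⟨MonoidAlgebra.of k (G ⧸ N) m - 1,
      Submodule.subset_span ⟨_, ⟨m, ⟨g, hgΩ, rfl⟩, rfl⟩, 1, (mul_one _).symm⟩, ?_⟩
    have h1 : (1 : MonoidAlgebra k (G ⧸ N)) + (MonoidAlgebra.of k (G ⧸ N) m - 1) =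
        MonoidAlgebra.of k (G ⧸ N) m := by abel
    rw [h1, orderOf_injective (MonoidAlgebra.of k (G ⧸ N)) MonoidAlgebra.of_injective m, hmord]
  · rintro ⟨x, hxmem, hxord⟩
    have hcomm_le : commutator G ≤ N := hN ▸ le_sup_right
    have hmho_le : mhoPow G (p ^ i) ≤ N := hN ▸ le_sup_left
    letI : CommGroup (G ⧸ N) :=
      { (inferInstance : Group (G ⧸ N)) with
        mul_comm := by
          intro a b
          induction a using QuotientGroup.induction_on with | H a => ?_
          induction b using QuotientGroup.induction_on with | H b => ?_
          rw [← QuotientGroup.mk_mul, ← QuotientGroup.mk_mul, QuotientGroup.eq]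
          have h2 : (a * b)⁻¹ * (b * a) = @Bracket.bracket G G commutatorElement b⁻¹ a⁻¹ := by
            simp [commutatorElement_def, mul_assoc]
          rw [h2]
          exact hcomm_le (commutator_def G ▸
            Subgroup.commutator_mem_commutator (Subgroup.mem_top _) (Subgroup.mem_top _)) }
    haveI : Nontrivial (MonoidAlgebra k (G ⧸ N)) := inferInstance
    haveI : CharP (MonoidAlgebra k (G ⧸ N)) p :=
      charP_of_injective_algebraMap (algebraMap k (MonoidAlgebra k (G ⧸ N))).injective p
    have hexp : ∀ qq : G ⧸ N, qq ^ (p ^ i) = 1 := by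
      intro qq
      induction qq using QuotientGroup.induction_on with | H a => ?_
      rw [← QuotientGroup.mk_pow]
      exact (QuotientGroup.eq_one_iff _).mpr (hmho_le (Subgroup.subset_closure ⟨a, rfl⟩))
    have key : ∃ m ∈ Subgroup.map (QuotientGroup.mk' N) (omegaCenter G (p ^ i)),
        m ^ (p ^ (i - 1)) ≠ 1 := by
      by_contra hcon
      push_neg at hcon
      have hxmem' : x ∈ Submodule.span k {y : MonoidAlgebra k (G ⧸ N) |
          ∃ s ∈ {y : MonoidAlgebra k (G ⧸ N) |
            ∃ m ∈ Subgroup.map (QuotientGroup.mk' N) (omegaCenter G (p ^ i)),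
              y = MonoidAlgebra.of k (G ⧸ N) m - 1}, ∃ a, y = s * a} := hxmem
      have hxq : x ^ (p ^ (i - 1)) = 0 := by
        refine Submodule.span_induction ?_ ?_ ?_ ?_ hxmem'
        · rintro y ⟨s, ⟨m, hmR, rfl⟩, a, rfl⟩
          rw [mul_pow, sub_pow_char_pow, ← map_pow, hcon m hmR, map_one, one_pow,
            sub_self, zero_mul]
        · exact zero_pow hq0
        · intro y z _ _ hy hz
          rw [add_pow_char_pow, hy, hz, add_zero]
        · intro c y _ hy
          rw [smul_pow, hy, smul_zero]
      have h1 : (1 + x) ^ (p ^ (i - 1)) = 1 := by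
        rw [add_pow_char_pow, one_pow, hxq, add_zero]
      have h2 := Nat.le_of_dvd (Nat.pos_of_ne_zero hq0) (orderOf_dvd_of_pow_eq_one h1)
      omega
    obtain ⟨m, hmR, hmq⟩ := key
    obtain ⟨g, hgΩ, rfl⟩ := hmR
    obtain ⟨hgc, hgp⟩ := omegaCenter_spec (p ^ i) hgΩ
    set mm : G ⧸ N := (QuotientGroup.mk' N) g with hmmdef
    obtain ⟨ι, hι, n, hn1, ⟨E⟩⟩ := CommGroup.equiv_prod_multiplicative_zmod_of_finite (G ⧸ N)
    haveI := Classical.decEq ι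
    have hndvd : ∀ j, ((p ^ i : ℕ) : ZMod (n j)) = 0 := by
      intro j
      have h1 : (E (E.symm (Pi.mulSingle j (Multiplicative.ofAdd (1 : ZMod (n j)))))) ^ (p ^ i)
          = (1 : ∀ j', Multiplicative (ZMod (n j'))) := by
        rw [← map_pow, hexp _, map_one]
      rw [E.apply_symm_apply] at h1
      have h2 := congrFun h1 j
      rw [Pi.pow_apply, Pi.mulSingle_eq_same, Pi.one_apply] at h2
      rw [← ofAdd_nsmul, nsmul_eq_mul, mul_one] at h2
      rw [show (1 : Multiplicative (ZMod (n j))) = Multiplicative.ofAdd (0 : ZMod (n j))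
        from rfl] at h2
      exact Multiplicative.ofAdd.injective h2
    have hEmq : (E mm) ^ (p ^ (i - 1)) ≠ 1 := by
      intro hcon
      apply hmq
      apply E.injective
      rw [map_pow, hcon, map_one]
    obtain ⟨j, hj⟩ : ∃ j, (E mm j) ^ (p ^ (i - 1)) ≠ 1 := by
      by_contra hc
      push_neg at hc
      apply hEmq
      funext j
      rw [Pi.pow_apply, hc j, Pi.one_apply]
    have haj1 : (E mm j) ^ (p ^ i) = 1 := by
      have h1 : (E mm) ^ (p ^ i) = 1 := by rw [← map_pow, hexp, map_one]
      have h2 := congrFun h1 j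
      rwa [Pi.pow_apply, Pi.one_apply] at h2
    have hordaj : orderOf (E mm j) = p ^ i := by
      have h := orderOf_eq_prime_pow (p := p) (n := i - 1) hj (by rwa [Nat.sub_add_cancel hi])
      rwa [Nat.sub_add_cancel hi] at h
    haveI : NeZero (n j) := ⟨by have := hn1 j; omega⟩
    have hcardj : Nat.card (Multiplicative (ZMod (n j))) = n j := by
      rw [Nat.card_congr (Multiplicative.toAdd (α := ZMod (n j)))]
      exact Nat.card_zmod (n j)
    have hnj : n j = p ^ i := by
      have hdvd1 : n j ∣ p ^ i := (ZMod.natCast_eq_zero_iff _ _).mp (hndvd j)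
      have hdvd2 : p ^ i ∣ n j := by
        have h := orderOf_dvd_natCard (E mm j)
        rwa [hordaj, hcardj] at h
      exact Nat.dvd_antisymm hdvd1 hdvd2
    have zc : Multiplicative (ZMod (n j)) ≃* Multiplicative (ZMod (p ^ i)) := by rw [hnj]
    set ψ₀ : (G ⧸ N) →* Multiplicative (ZMod (p ^ i)) :=
      zc.toMonoidHom.comp
        ((Pi.evalMonoidHom (fun j' => Multiplicative (ZMod (n j'))) j).comp E.toMonoidHom)
      with hψ₀def
    have hψ₀mm : ψ₀ mm = zc (E mm j) := rfl
    have hcord : orderOf (ψ₀ mm) = p ^ i := by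
      rw [hψ₀mm]
      exact (orderOf_injective zc.toMonoidHom zc.injective _).trans hordaj
    set c : ZMod (p ^ i) := Multiplicative.toAdd (ψ₀ mm) with hcdef
    have hcadd : addOrderOf c = p ^ i := by
      rw [← orderOf_ofAdd_eq_addOrderOf, hcdef, ofAdd_toAdd, hcord]
    have hunit : IsUnit c := by
      have hv : ((c.val : ℕ) : ZMod (p ^ i)) = c := ZMod.natCast_rightInverse c
      rw [← hv, ZMod.isUnit_iff_coprime]
      rcases (Nat.coprime_or_dvd_of_prime hp c.val) with h | h
      · exact Nat.Coprime.pow_right i h.symm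
      · exfalso
        obtain ⟨w, hw⟩ := h
        have hz : (p ^ (i - 1)) • c = 0 := by
          rw [nsmul_eq_mul, ← hv, hw, ← Nat.cast_mul]
          have harith : p ^ (i - 1) * (p * w) = p ^ i * w := by
            rw [← mul_assoc, ← pow_succ, Nat.sub_add_cancel hi]
          rw [harith, Nat.cast_mul, ZMod.natCast_self, zero_mul]
        have hdvd : addOrderOf c ∣ p ^ (i - 1) := addOrderOf_dvd_iff_nsmul_eq_zero.mpr hz
        rw [hcadd] at hdvd
        exact absurd (Nat.le_of_dvd (Nat.pos_of_ne_zero hq0) hdvd) (not_le.mpr hqlt)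
    set u : (ZMod (p ^ i))ˣ := hunit.unit with hudef
    set ψ : G →* Multiplicative (ZMod (p ^ i)) :=
      (AddMonoidHom.toMultiplicative
          (AddMonoidHom.mulLeft ((u⁻¹ : (ZMod (p ^ i))ˣ) : ZMod (p ^ i)))).comp
        (ψ₀.comp (QuotientGroup.mk' N)) with hψdef
    have hψg : ψ g = Multiplicative.ofAdd (1 : ZMod (p ^ i)) := by
      show Multiplicative.ofAdd (((u⁻¹ : (ZMod (p ^ i))ˣ) : ZMod (p ^ i)) *
        Multiplicative.toAdd (ψ₀ ((QuotientGroup.mk' N) g))) = _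
      rw [← hmmdef, ← hcdef]
      have hcu : c = (u : ZMod (p ^ i)) := (hunit.unit_spec).symm
      rw [hcu, Units.inv_mul]
    have hfz : (zmultiplesHom (Additive G) (Additive.ofMul g)) ((p ^ i : ℕ) : ℤ) = 0 := by
      show ((p ^ i : ℕ) : ℤ) • Additive.ofMul g = 0
      rw [natCast_zsmul, ← ofMul_pow, hgp]
      rfl
    set σ_add : ZMod (p ^ i) →+ Additive G :=
      ZMod.lift (p ^ i) ⟨zmultiplesHom (Additive G) (Additive.ofMul g), hfz⟩ with hσadef
    set σ : Multiplicative (ZMod (p ^ i)) →* G := AddMonoidHom.toMultiplicativeLeft σ_add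
      with hσdef
    have hσ1 : σ (Multiplicative.ofAdd 1) = g := by
      have h1 : σ (Multiplicative.ofAdd 1) = Additive.toMul (σ_add (1 : ZMod (p ^ i))) := rfl
      rw [h1]
      have h2 : ((1 : ℤ) : ZMod (p ^ i)) = 1 := Int.cast_one
      rw [← h2, hσadef, ZMod.lift_coe]
      show Additive.toMul ((1 : ℤ) • Additive.ofMul g) = g
      rw [one_zsmul, toMul_ofMul]
    have hret : ∀ t, ψ (σ t) = t := by
      intro t
      obtain ⟨v, rfl⟩ := multZMod_gen_pow t
      rw [map_pow, map_pow, hσ1, hψg]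
    have hcent : ∀ (t : Multiplicative (ZMod (p ^ i))) (y : G), Commute (σ t) y := by
      intro t y
      obtain ⟨v, rfl⟩ := multZMod_gen_pow t
      rw [map_pow, hσ1]
      have hcg : Commute g y := ((Subgroup.mem_center_iff.mp hgc) y).symm
      exact hcg.pow_left v
    obtain ⟨eqv⟩ := retraction_equiv ψ σ hret hcent
    exact ⟨ψ.ker, ⟨eqv⟩⟩
end

section
/- Let G be a finite p-group, k a field of characteristic p, and suppose kG = B ⊗ C for subalgebras B, C with B commutative (B central in kG). Then [kG, kG] = [I(C), I(C)] + [I(C), I(C)]·I(B), and in particular [kG, kG] ⊆ I(C) ⊕ I(B)I(C). -/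
/-- The `k`-span of the Lie commutators `u*v - v*u`, `u ∈ U`, `v ∈ V`. -/
def commSpan {k A : Type*} [CommSemiring k] [Ring A] [Algebra k A]
    (U V : Submodule k A) : Submodule k A :=
  Submodule.span k {x : A | ∃ u ∈ U, ∃ v ∈ V, x = u * v - v * u}

/-- If `kG = B ⊗ C` with `B`, `C` subalgebras and `B` commutative (hence
central in `kG`), then `[kG, kG] = [I(C), I(C)] + [I(C), I(C)]·I(B)`, and in particular
`[kG, kG] ⊆ I(C) ⊕ I(B)I(C)`. -/
theorem stmt12 (k : Type*) [Field k] (p : ℕ) [Fact p.Prime] [CharP k p]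
    (G : Type*) [Group G] [Finite G] (hG : IsPGroup p G)
    (B C : Subalgebra k (MonoidAlgebra k G))
    (hBcentral : ∀ b ∈ B, ∀ x : MonoidAlgebra k G, Commute b x)
    (hmul : Function.Bijective
      (Submodule.mulMap (Subalgebra.toSubmodule B) (Subalgebra.toSubmodule C)))
    (IB IC : Submodule k (MonoidAlgebra k G))
    (hIB : IB = (RingHom.ker (augmentation k G)).restrictScalars k ⊓ Subalgebra.toSubmodule B)
    (hIC : IC = (RingHom.ker (augmentation k G)).restrictScalars k ⊓ Subalgebra.toSubmodule C) :
    commutatorSubmodule k (MonoidAlgebra k G) = commSpan IC IC ⊔ commSpan IC IC * IB ∧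
    commutatorSubmodule k (MonoidAlgebra k G) ≤ IC ⊔ IB * IC := by
  set A := MonoidAlgebra k G
  set ε := augmentation k G with hε
  set S := commSpan IC IC ⊔ commSpan IC IC * IB with hS
  have hIBmem : ∀ x : A, x ∈ IB ↔ ε x = 0 ∧ x ∈ B := by
    intro x; rw [hIB]; simp [Submodule.mem_inf, RingHom.mem_ker]
  have hICmem : ∀ x : A, x ∈ IC ↔ ε x = 0 ∧ x ∈ C := by
    intro x; rw [hIC]; simp [Submodule.mem_inf, RingHom.mem_ker]
  have haug : ∀ x : A, ε (x - ε x • 1) = 0 := by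
    intro x
    rw [map_sub, map_smul, map_one, smul_eq_mul, mul_one, sub_self]
  have htop : Subalgebra.toSubmodule B * Subalgebra.toSubmodule C = ⊤ := by
    rw [← Submodule.mulMap_range, LinearMap.range_eq_top.mpr hmul.surjective]
  have hgen : ∀ u ∈ IC, ∀ v ∈ IC, u * v - v * u ∈ commSpan IC IC :=
    fun u hu v hv => Submodule.subset_span ⟨u, hu, v, hv, rfl⟩
  -- key: every commutator is in S
  have key : ∀ a b : A, a * b - b * a ∈ S := by
    have main : ∀ m ∈ B, ∀ n ∈ C, ∀ m' ∈ B, ∀ n' ∈ C,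
        (m * n) * (m' * n') - (m' * n') * (m * n) ∈ S := by
      intro m hm n hn m' hm' n' hn'
      have hcm : ∀ x : A, m * x = x * m := fun x => (hBcentral m hm x).eq
      have hcm' : ∀ x : A, m' * x = x * m' := fun x => (hBcentral m' hm' x).eq
      have h1 : (m * n) * (m' * n') - (m' * n') * (m * n)
          = (m * m') * (n * n' - n' * n) := by
        rw [mul_sub]
        congr 1
        · calc m * n * (m' * n') = m * (n * m') * n' := by noncomm_ring
            _ = m * (m' * n) * n' := by rw [← hcm' n]
            _ = m * m' * (n * n') := by noncomm_ring
        · calc m' * n' * (m * n) = m' * (n' * m) * n := by noncomm_ring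
            _ = m' * (m * n') * n := by rw [← hcm n']
            _ = m * m' * (n' * n) := by rw [← mul_assoc, ← hcm m', mul_assoc]
      set γ := n - ε n • 1 with hγ
      set γ' := n' - ε n' • 1 with hγ'
      have hγC : γ ∈ IC := by
        rw [hICmem]
        exact ⟨haug n, sub_mem hn (SMulMemClass.smul_mem _ (one_mem C))⟩
      have hγ'C : γ' ∈ IC := by
        rw [hICmem]
        exact ⟨haug n', sub_mem hn' (SMulMemClass.smul_mem _ (one_mem C))⟩
      have h2 : γ * γ' - γ' * γ = n * n' - n' * n := by
        simp only [hγ, hγ', sub_mul, mul_sub, smul_mul_assoc, mul_smul_comm,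
          one_mul, mul_one, smul_smul, smul_sub]
        rw [mul_comm (ε n') (ε n)]
        abel
      set β := m * m' - ε (m * m') • 1 with hβ
      have hβB : β ∈ IB := by
        rw [hIBmem]
        exact ⟨haug _, sub_mem (mul_mem hm hm') (SMulMemClass.smul_mem _ (one_mem B))⟩
      set D := γ * γ' - γ' * γ with hD
      have hc : (m * m') * D = D * (m * m') :=
        (hBcentral (m * m') (mul_mem hm hm') D).eq
      have h3 : ε (m * m') • D + D * β = (m * m') * (n * n' - n' * n) := by
        rw [hβ, mul_sub D, mul_smul_comm, mul_one, add_sub_cancel, ← hc]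
        exact congrArg (fun z => (m * m') * z) h2
      rw [h1, ← h3]
      exact add_mem
        (Submodule.mem_sup_left (Submodule.smul_mem _ _ (hgen _ hγC _ hγ'C)))
        (Submodule.mem_sup_right (Submodule.mul_mem_mul (hgen _ hγC _ hγ'C) hβB))
    intro a b
    have ha : a ∈ Subalgebra.toSubmodule B * Subalgebra.toSubmodule C := by
      rw [htop]; trivial
    have hb : b ∈ Subalgebra.toSubmodule B * Subalgebra.toSubmodule C := by
      rw [htop]; trivial
    clear htop
    revert b
    refine Submodule.mul_induction_on ha (fun m hm n hn => ?_) (fun x y ihx ihy => ?_)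
    · intro b hb
      refine Submodule.mul_induction_on hb
        (fun m' hm' n' hn' => main m hm n hn m' hm' n' hn')
        (fun x y ihx ihy => ?_)
      have : m * n * (x + y) - (x + y) * (m * n)
          = (m * n * x - x * (m * n)) + (m * n * y - y * (m * n)) := by noncomm_ring
      rw [this]; exact add_mem ihx ihy
    · intro b hb
      have : (x + y) * b - b * (x + y)
          = (x * b - b * x) + (y * b - b * y) := by noncomm_ring
      rw [this]; exact add_mem (ihx b hb) (ihy b hb)
  have hle1 : commutatorSubmodule k A ≤ S := by
    rw [commutatorSubmodule, Submodule.span_le]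
    rintro x ⟨a, b, rfl⟩
    exact key a b
  have hcommle : commSpan IC IC ≤ commutatorSubmodule k A := by
    rw [commSpan, Submodule.span_le]
    rintro x ⟨u, _, v, _, rfl⟩
    exact Submodule.subset_span ⟨u, v, rfl⟩
  have hle2 : S ≤ commutatorSubmodule k A := by
    rw [hS, sup_le_iff]
    refine ⟨hcommle, Submodule.mul_le.mpr ?_⟩
    intro x hx y hy
    rw [commSpan] at hx
    induction hx using Submodule.span_induction with
    | mem z hz =>
      obtain ⟨u, -, v, -, rfl⟩ := hz
      have hyB : y ∈ B := ((hIBmem y).mp hy).2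
      have h : y * u = u * y := (hBcentral y hyB u).eq
      have h2 : (v * y) * u = v * u * y := by rw [mul_assoc, h, ← mul_assoc]
      have heq : (u * v - v * u) * y = u * (v * y) - (v * y) * u := by
        rw [sub_mul, mul_assoc u v y, h2]
      rw [heq]
      exact Submodule.subset_span ⟨u, v * y, rfl⟩
    | zero => simp [(commutatorSubmodule k A).zero_mem]
    | add a b _ _ iha ihb => rw [add_mul]; exact add_mem iha ihb
    | smul r a _ iha => rw [smul_mul_assoc]; exact Submodule.smul_mem _ _ iha
  have heq : commutatorSubmodule k A = S := le_antisymm hle1 hle2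
  refine ⟨heq, ?_⟩
  rw [heq, hS, sup_le_iff]
  have hICIC : commSpan IC IC ≤ IC := by
    rw [commSpan, Submodule.span_le]
    rintro x ⟨u, hu, v, hv, rfl⟩
    obtain ⟨hu0, huC⟩ := (hICmem u).mp hu
    obtain ⟨hv0, hvC⟩ := (hICmem v).mp hv
    refine sub_mem ?_ ?_ <;> rw [hICmem] <;>
      simp [map_mul, hu0, hv0, mul_mem huC hvC, mul_mem hvC huC]
  refine ⟨le_trans hICIC le_sup_left, ?_⟩
  refine le_trans (mul_le_mul' hICIC le_rfl) (le_trans ?_ le_sup_right)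
  rw [Submodule.mul_le]
  intro m hm n hn
  have h := (hBcentral n ((hIBmem n).mp hn).2 m).eq
  rw [← h]
  exact Submodule.mul_mem_mul hn hm
end

section
/- Let G be a finite p-group, k a field of characteristic p, and suppose kG = B ⊗ C for proper subalgebras B, C with B commutative. If p^s is the exponent of V(B) = (1 + I(B)) ∩ U(B), then I(℧_s(G)G')·kG ⊆ I(C) ⊕ I(B)I(C). -/
open scoped commutatorElement in
open TensorProduct in
set_option maxHeartbeats 1000000 in
set_option synthInstance.maxHeartbeats 400000 in
/-- If `kG = B ⊗ C` with `B`, `C` proper subalgebras, `B` commutative, and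
`p^s` is the exponent of `V(B) = (1 + I(B)) ∩ U(B)`, then
`I(℧_s(G)G')·kG ⊆ I(C) ⊕ I(B)I(C)`. -/
theorem stmt14 (k : Type*) [Field k] (p : ℕ) [Fact p.Prime] [CharP k p]
    (G : Type*) [Group G] [Finite G] (hG : IsPGroup p G)
    (B C : Subalgebra k (MonoidAlgebra k G))
    (hBcomm : ∀ b ∈ B, ∀ b' ∈ B, Commute b b')
    (hcomm : ∀ b ∈ B, ∀ c ∈ C, Commute b c)
    (hmul : Function.Bijective
      (Submodule.mulMap (Subalgebra.toSubmodule B) (Subalgebra.toSubmodule C)))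
    (hB : B ≠ ⊥) (hC : C ≠ ⊥)
    (V : Subgroup Bˣ)
    (hV : ∀ u : Bˣ, u ∈ V ↔
      ((u : B) : MonoidAlgebra k G) - 1 ∈ RingHom.ker (augmentation k G))
    (s : ℕ) (hs : Monoid.exponent V = p ^ s)
    (IB IC : Submodule k (MonoidAlgebra k G))
    (hIB : IB = (RingHom.ker (augmentation k G)).restrictScalars k ⊓ Subalgebra.toSubmodule B)
    (hIC : IC = (RingHom.ker (augmentation k G)).restrictScalars k ⊓ Subalgebra.toSubmodule C) :
    rightIdealSpan k {x : MonoidAlgebra k G |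
        ∃ n ∈ mhoPow G (p ^ s) ⊔ commutator G, x = MonoidAlgebra.of k G n - 1} ≤
      IC ⊔ IB * IC := by
  classical
  set aug := augmentation k G with haug
  set B' : Submodule k (MonoidAlgebra k G) := Subalgebra.toSubmodule B with hB'
  set C' : Submodule k (MonoidAlgebra k G) := Subalgebra.toSubmodule C with hC'
  set J : Submodule k (MonoidAlgebra k G) := B' * IC with hJdef
  -- basic membership facts
  have hIC_C : ∀ x ∈ IC, x ∈ C := by
    intro x hx; rw [hIC] at hx; exact hx.2
  have hIC_aug : ∀ x ∈ IC, aug x = 0 := by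
    intro x hx; rw [hIC] at hx; exact hx.1
  have hIC_mem : ∀ x : (MonoidAlgebra k G), x ∈ C → aug x = 0 → x ∈ IC := by
    intro x h1 h2; rw [hIC]; exact ⟨h2, h1⟩
  -- `⊤ = B' * C'`
  have htop : (⊤ : Submodule k (MonoidAlgebra k G)) ≤ B' * C' := by
    rw [← Submodule.mulMap_range B' C', LinearMap.range_eq_top.2 hmul.2]
  -- submodule multiplication inequalities
  have hCB : C' * B' ≤ B' * C' := by
    refine Submodule.mul_le.2 fun c hc b hb => ?_
    rw [← (hcomm b hb c hc)]
    exact Submodule.mul_mem_mul hb hc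
  have hICB : IC * B' ≤ B' * IC := by
    refine Submodule.mul_le.2 fun x hx b hb => ?_
    rw [← (hcomm b hb x (hIC_C x hx))]
    exact Submodule.mul_mem_mul hb hx
  have hBB : B' * B' ≤ B' := Submodule.mul_le.2 fun a ha b hb => B.mul_mem ha hb
  have hCIC : C' * IC ≤ IC := by
    refine Submodule.mul_le.2 fun c hc x hx => hIC_mem _ (mul_mem hc (hIC_C x hx)) ?_
    rw [map_mul, hIC_aug x hx, mul_zero]
  have hICC : IC * C' ≤ IC := by
    refine Submodule.mul_le.2 fun x hx c hc => hIC_mem _ (mul_mem (hIC_C x hx) hc) ?_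
    rw [map_mul, hIC_aug x hx, zero_mul]
  -- J is a right ideal
  have hJBC : J * (B' * C') ≤ J := by
    calc B' * IC * (B' * C') = B' * (IC * B') * C' := by rw [mul_assoc, mul_assoc, mul_assoc]
    _ ≤ B' * (B' * IC) * C' := by
        exact mul_le_mul_left (mul_le_mul_right hICB B') C'
    _ = (B' * B') * (IC * C') := by rw [mul_assoc, mul_assoc, mul_assoc]
    _ ≤ B' * IC := mul_le_mul' hBB hICC
  have hBCJ : (B' * C') * J ≤ J := by
    calc (B' * C') * (B' * IC) = B' * (C' * B') * IC := by rw [mul_assoc, mul_assoc, mul_assoc]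
    _ ≤ B' * (B' * C') * IC := by
        exact mul_le_mul_left (mul_le_mul_right hCB B') IC
    _ = (B' * B') * (C' * IC) := by rw [mul_assoc, mul_assoc, mul_assoc]
    _ ≤ B' * IC := mul_le_mul' hBB hCIC
  have hJr : ∀ j ∈ J, ∀ a : (MonoidAlgebra k G), j * a ∈ J := fun j hj a =>
    hJBC (Submodule.mul_mem_mul hj (htop Submodule.mem_top))
  have hJl : ∀ j ∈ J, ∀ a : (MonoidAlgebra k G), a * j ∈ J := fun j hj a =>
    hBCJ (Submodule.mul_mem_mul (htop Submodule.mem_top) hj)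
  -- congruence mod J is multiplicative
  have hcongr : ∀ x x' y y' : (MonoidAlgebra k G), x - x' ∈ J → y - y' ∈ J → x * y - x' * y' ∈ J := by
    intro x x' y y' h1 h2
    have : x * y - x' * y' = (x - x') * y + x' * (y - y') := by
      rw [sub_mul, mul_sub]; abel
    rw [this]
    exact add_mem (hJr _ h1 y) (hJl _ h2 x')
  -- the projection onto B along J
  set e := LinearEquiv.ofBijective _ hmul with he
  set augC : ↥C →ₗ[k] k := aug.toLinearMap.comp C.val.toLinearMap with haugC
  set Lval : (↥B ⊗[k] ↥C) →ₗ[k] (MonoidAlgebra k G) :=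
    B.val.toLinearMap ∘ₗ (TensorProduct.rid k ↥B).toLinearMap ∘ₗ (LinearMap.lTensor ↥B augC)
    with hLval
  set P : (MonoidAlgebra k G) →ₗ[k] (MonoidAlgebra k G) := Lval ∘ₗ e.symm.toLinearMap with hP
  have hkey : ∀ (b : ↥B) (c : ↥C), P ((b : (MonoidAlgebra k G)) * (c : (MonoidAlgebra k G))) = aug (c : (MonoidAlgebra k G)) • (b : (MonoidAlgebra k G)) := by
    intro b c
    have h1 : (b : (MonoidAlgebra k G)) * (c : (MonoidAlgebra k G)) = Submodule.mulMap B' C' (b ⊗ₜ[k] c) := rfl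
    have h2 : e.symm ((b : (MonoidAlgebra k G)) * (c : (MonoidAlgebra k G))) = b ⊗ₜ[k] c := by
      rw [h1]
      exact e.symm_apply_apply (b ⊗ₜ[k] c)
    have h3 : P ((b : MonoidAlgebra k G) * (c : MonoidAlgebra k G)) = Lval (b ⊗ₜ[k] c) :=
      congrArg Lval h2
    rw [h3, hLval]
    simp only [LinearMap.comp_apply, LinearEquiv.coe_coe, haugC,
      LinearMap.lTensor_tmul, TensorProduct.rid_tmul]
    simp
  have hPB : ∀ b ∈ B, P b = b := by
    intro b hb
    have := hkey ⟨b, hb⟩ 1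
    simpa using this
  have hPJ : ∀ j ∈ J, P j = 0 := by
    intro j hj
    refine Submodule.mul_induction_on hj (fun b hb x hx => ?_) (fun x y hx hy => ?_)
    · have := hkey ⟨b, hb⟩ ⟨x, hIC_C x hx⟩
      simpa [hIC_aug x hx] using this
    · rw [map_add, hx, hy, add_zero]
  have hPdec : ∀ x : (MonoidAlgebra k G), P x ∈ B ∧ x - P x ∈ J := by
    intro x
    refine Submodule.mul_induction_on (htop (Submodule.mem_top : x ∈ ⊤))
      (fun b hb c hc => ?_) (fun x y hx hy => ?_)
    · constructor
      · rw [show (b * c : (MonoidAlgebra k G)) = (⟨b, hb⟩ : ↥B) * (⟨c, hc⟩ : ↥C) from rfl, hkey]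
        exact Submodule.smul_mem _ _ hb
      · rw [show (b * c : (MonoidAlgebra k G)) = (⟨b, hb⟩ : ↥B) * (⟨c, hc⟩ : ↥C) from rfl, hkey]
        have heq : b * c - aug c • b = b * (c - aug c • 1) := by
          rw [mul_sub, mul_smul_comm, mul_one]
        rw [heq]
        refine Submodule.mul_mem_mul hb (hIC_mem _ (sub_mem hc (C.smul_mem (one_mem C) _)) ?_)
        rw [map_sub, map_smul, map_one, smul_eq_mul, mul_one, sub_self]
    · refine ⟨by rw [map_add]; exact add_mem hx.1 hy.1, ?_⟩
      rw [map_add]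
      have : x + y - (P x + P y) = (x - P x) + (y - P y) := by abel
      rw [this]; exact add_mem hx.2 hy.2
  -- J is inside the kernel of aug
  have hJaug : ∀ j ∈ J, aug j = 0 := by
    intro j hj
    refine Submodule.mul_induction_on hj (fun b hb x hx => ?_) (fun x y hx hy => ?_)
    · rw [map_mul, hIC_aug x hx, mul_zero]
    · rw [map_add, hx, hy, add_zero]
  -- B ∩ J = 0
  have hBJ : ∀ y, y ∈ B → y ∈ J → y = 0 := by
    intro y hy hyJ
    rw [← hPB y hy, hPJ y hyJ]
  -- for each g, P (of g) is a unit of B lying in V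
  set og : G →* (MonoidAlgebra k G) := MonoidAlgebra.of k G with hog
  have haug_og : ∀ g : G, aug (og g) = 1 := by
    intro g
    simp [haug, hog, augmentation, MonoidAlgebra.lift_single]
  have haugP : ∀ g : G, aug (P (og g)) = 1 := by
    intro g
    have h1 := hJaug _ ((hPdec (og g)).2)
    rw [map_sub, haug_og g, sub_eq_zero] at h1
    exact h1.symm
  have hPmul1 : ∀ g : G, P (og g) * P (og g⁻¹) = 1 := by
    intro g
    refine sub_eq_zero.1 (hBJ _ (sub_mem (mul_mem (hPdec (og g)).1 (hPdec (og g⁻¹)).1) (one_mem B)) ?_)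
    have h1 : og g * og g⁻¹ = 1 := by rw [← map_mul, mul_inv_cancel, map_one]
    have := hcongr (P (og g)) (og g) (P (og g⁻¹)) (og g⁻¹)
      (by have := (hPdec (og g)).2; simpa using neg_mem this)
      (by have := (hPdec (og g⁻¹)).2; simpa using neg_mem this)
    rwa [h1] at this
  -- bundle as a unit of ↥B
  have hpows : ∀ g : G, (P (og g)) ^ (p ^ s) = 1 := by
    intro g
    set bg : ↥B := ⟨P (og g), (hPdec (og g)).1⟩ with hbg
    set bg' : ↥B := ⟨P (og g⁻¹), (hPdec (og g⁻¹)).1⟩ with hbg'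
    have h1 : bg * bg' = 1 := Subtype.ext (hPmul1 g)
    have h2 : bg' * bg = 1 := by
      apply Subtype.ext
      show P (og g⁻¹) * P (og g) = 1
      rw [(hBcomm _ (hPdec (og g⁻¹)).1 _ (hPdec (og g)).1).eq]
      exact hPmul1 g
    set ug : Bˣ := ⟨bg, bg', h1, h2⟩ with hug
    have hugV : ug ∈ V := by
      rw [hV]
      have : ((ug : ↥B) : (MonoidAlgebra k G)) = P (og g) := rfl
      rw [this, RingHom.mem_ker, map_sub, map_one, haugP g, sub_self]
    have hvpow : (⟨ug, hugV⟩ : V) ^ (p ^ s) = 1 := by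
      rw [← hs]
      exact Monoid.pow_exponent_eq_one _
    have hupow : ug ^ (p ^ s) = 1 := by
      have := congrArg (Subtype.val) hvpow
      simpa using this
    have hbpow : bg ^ (p ^ s) = 1 := by
      have := congrArg (Units.val) hupow
      simpa using this
    have := congrArg (Subtype.val) hbpow
    simpa using this
  -- congruence for powers
  have hpow_congr : ∀ (x y : (MonoidAlgebra k G)), x - y ∈ J → ∀ n : ℕ, x ^ n - y ^ n ∈ J := by
    intro x y h n
    induction n with
    | zero => simpa using zero_mem J
    | succ m ih =>
      rw [pow_succ, pow_succ]
      exact hcongr _ _ _ _ ih h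
  -- the subgroup of elements congruent to 1 mod J
  set H : Subgroup G :=
    { carrier := {n : G | og n - 1 ∈ J}
      one_mem' := by simpa using zero_mem J
      mul_mem' := by
        intro a b ha hb
        have : og (a * b) - 1 = (og a - 1) * og b + (og b - 1) := by
          rw [map_mul, sub_mul, one_mul]; abel
        simp only [Set.mem_setOf_eq] at *
        rw [this]
        exact add_mem (hJr _ ha (og b)) hb
      inv_mem' := by
        intro a ha
        simp only [Set.mem_setOf_eq] at *
        have : og a⁻¹ - 1 = -((og a - 1) * og a⁻¹) := by
          have h1 : og a * og a⁻¹ = 1 := by rw [← map_mul, mul_inv_cancel, map_one]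
          rw [sub_mul, h1, neg_sub, one_mul]
        rw [this]
        exact neg_mem (hJr _ ha (og a⁻¹)) } with hH
  have hHle : mhoPow G (p ^ s) ⊔ commutator G ≤ H := by
    refine sup_le ?_ ?_
    · refine Subgroup.closure_le H |>.2 ?_
      rintro _ ⟨g, rfl⟩
      show og (g ^ (p ^ s)) - 1 ∈ J
      rw [map_pow, ← hpows g]
      exact hpow_congr _ _ (hPdec (og g)).2 (p ^ s)
    · rw [commutator_def, Subgroup.commutator_def]
      refine Subgroup.closure_le H |>.2 ?_
      rintro _ ⟨g, -, h, -, rfl⟩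
      show og ⁅g, h⁆ - 1 ∈ J
      have hgh : og (g * h) - og (h * g) ∈ J := by
        have h1 : og (g * h) - P (og g) * P (og h) ∈ J := by
          rw [map_mul]
          exact hcongr _ _ _ _ (hPdec (og g)).2 (hPdec (og h)).2
        have h2 : og (h * g) - P (og g) * P (og h) ∈ J := by
          rw [map_mul, (hBcomm _ (hPdec (og g)).1 _ (hPdec (og h)).1).eq]
          exact hcongr _ _ _ _ (hPdec (og h)).2 (hPdec (og g)).2
        have := sub_mem h1 h2
        simpa using this
      have heq : og ⁅g, h⁆ - 1 = (og (g * h) - og (h * g)) * og (g⁻¹ * h⁻¹) := by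
        have h1 : og (h * g) * og (g⁻¹ * h⁻¹) = 1 := by
          rw [← map_mul, ← map_one og]
          congr 1
          group
        rw [sub_mul, h1, commutatorElement_def, ← map_mul]
        congr 2
        group
      rw [heq]
      exact hJr _ hgh _
  -- J ≤ IC ⊔ IB * IC
  have hJle : J ≤ IC ⊔ IB * IC := by
    refine Submodule.mul_le.2 fun b hb x hx => ?_
    have hb' : b ∈ B := hb
    have heq : b * x = aug b • x + (b - aug b • 1) * x := by
      rw [sub_mul, smul_mul_assoc, one_mul]; abel
    rw [heq]
    refine add_mem (Submodule.mem_sup_left (Submodule.smul_mem _ _ hx))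
      (Submodule.mem_sup_right (Submodule.mul_mem_mul ?_ hx))
    rw [hIB]
    refine ⟨?_, sub_mem hb' (B.smul_mem (one_mem B) _)⟩
    show aug _ = 0
    rw [map_sub, map_smul, map_one, smul_eq_mul, mul_one, sub_self]
  -- conclude
  rw [rightIdealSpan, Submodule.span_le]
  rintro _ ⟨x, ⟨n, hn, rfl⟩, a, rfl⟩
  exact hJle (hJr _ (hHle hn) a)
end

section
/- Let G be a finite p-group and k = F_p. The map g·Φ(G) ↦ (g − 1) + I(G)² defines a group isomorphism from G/Φ(G) onto the additive group I(G)/I(G)², where Φ(G) is the Frattini subgroup. -/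
open Subgroup MonoidAlgebra
open scoped commutatorElement

set_option linter.unusedSectionVars false
set_option linter.unusedVariables false


section AuxGroup
variable {p : ℕ} [Fact p.Prime] {G : Type*} [Group G] [Finite G]

lemma aux_coatom_props (hG : IsPGroup p G) {M : Subgroup G} (hM : IsCoatom M) (g h : G) :
    g ^ p ∈ M ∧ ⁅g, h⁆ ∈ M := by
  haveI hN : M.Normal :=
    Subgroup.NormalizerCondition.normal_of_coatom M
      (normalizerCondition_of_isNilpotent (h := hG.isNilpotent)) hM
  -- every nontrivial element of the quotient generates it
  have hgen : ∀ x : G ⧸ M, x ≠ 1 → ∀ y : G ⧸ M, y ∈ zpowers x := by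
    intro x hx y
    have hle : M ≤ comap (QuotientGroup.mk' M) (zpowers x) := by
      intro m hm
      simp only [mem_comap, QuotientGroup.mk'_apply]
      rw [(QuotientGroup.eq_one_iff m).mpr hm]
      exact one_mem _
    obtain ⟨g₀, hg₀⟩ := QuotientGroup.mk'_surjective M x
    have hlt : M < comap (QuotientGroup.mk' M) (zpowers x) := by
      refine lt_of_le_of_ne hle fun he => hx ?_
      have : g₀ ∈ comap (QuotientGroup.mk' M) (zpowers x) := by
        simp [mem_comap, hg₀, mem_zpowers]
      rw [← he] at this
      rw [← hg₀]
      exact (QuotientGroup.eq_one_iff g₀).mpr this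
    have htop := hM.2 _ hlt
    obtain ⟨g₁, rfl⟩ := QuotientGroup.mk'_surjective M y
    have : g₁ ∈ comap (QuotientGroup.mk' M) (zpowers x) := htop ▸ mem_top g₁
    exact mem_comap.mp this
  -- the quotient has order p
  obtain ⟨g₀, hg₀⟩ := SetLike.exists_of_lt hM.1.lt_top
  haveI : Nontrivial (G ⧸ M) :=
    nontrivial_of_ne (QuotientGroup.mk g₀) 1
      (fun he => hg₀.2 ((QuotientGroup.eq_one_iff g₀).mp he))
  obtain ⟨n, hn⟩ := IsPGroup.iff_card.mp (hG.to_quotient M)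
  have hp := (Fact.out : p.Prime)
  have hn0 : n ≠ 0 := by
    rintro rfl
    simp only [pow_zero] at hn
    have := Finite.one_lt_card (α := G ⧸ M)
    omega
  obtain ⟨x, hx⟩ := exists_ne (1 : G ⧸ M)
  have hxord : orderOf x = Nat.card (G ⧸ M) := orderOf_eq_card_of_forall_mem_zpowers (hgen x hx)
  have hy : x ^ p ^ (n - 1) ≠ 1 := by
    apply pow_ne_one_of_lt_orderOf (pow_ne_zero _ hp.pos.ne')
    rw [hxord, hn]
    exact Nat.pow_lt_pow_right hp.one_lt (Nat.sub_lt (Nat.pos_of_ne_zero hn0) one_pos)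
  have hyord : orderOf (x ^ p ^ (n - 1)) = Nat.card (G ⧸ M) :=
    orderOf_eq_card_of_forall_mem_zpowers (hgen _ hy)
  have hyp : (x ^ p ^ (n - 1)) ^ p = 1 := by
    have he : p ^ (n - 1) * p = p ^ n := by
      rw [← pow_succ, Nat.sub_add_cancel (Nat.pos_of_ne_zero hn0)]
    rw [← pow_mul, he, ← hn, pow_card_eq_one']
  have hdvd : Nat.card (G ⧸ M) ∣ p := hyord ▸ orderOf_dvd_of_pow_eq_one hyp
  have hcard : Nat.card (G ⧸ M) = p :=
    Nat.dvd_antisymm hdvd (hn ▸ dvd_pow_self p hn0)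
  constructor
  · have := M.pow_index_mem g
    rwa [Subgroup.index, hcard] at this
  · rw [← QuotientGroup.eq_one_iff]
    have hcomm : Commute (QuotientGroup.mk g : G ⧸ M) (QuotientGroup.mk h) := by
      rcases eq_or_ne (QuotientGroup.mk g : G ⧸ M) 1 with he | he
      · rw [he]; exact Commute.one_left _
      · obtain ⟨a, ha⟩ := hgen _ he (QuotientGroup.mk h)
        rw [← ha]
        exact (Commute.refl _).zpow_right a
    have : (QuotientGroup.mk : G → G ⧸ M) ⁅g, h⁆ = ⁅(QuotientGroup.mk g : G ⧸ M), QuotientGroup.mk h⁆ := by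
      simp [commutatorElement_def]
    rw [this, commutatorElement_eq_one_iff_commute]
    exact hcomm

lemma aux_mem_frattini {x : G} (h : ∀ M : Subgroup G, IsCoatom M → x ∈ M) : x ∈ frattini G := by
  rw [frattini, Order.radical]
  simp only [Subgroup.mem_iInf]
  exact fun M hM => h M hM

lemma aux_pow_frattini (hG : IsPGroup p G) (g : G) : g ^ p ∈ frattini G :=
  aux_mem_frattini fun M hM => (aux_coatom_props hG hM g g).1

lemma aux_comm_frattini (hG : IsPGroup p G) (g h : G) : ⁅g, h⁆ ∈ frattini G :=
  aux_mem_frattini fun M hM => (aux_coatom_props hG hM g h).2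

end AuxGroup


section AuxAlg
variable (p : ℕ) [Fact p.Prime] {G : Type*} [Group G]

lemma aug_single (g : G) (a : ZMod p) :
    augmentation (ZMod p) G (MonoidAlgebra.single g a) = a := by
  simp [augmentation, MonoidAlgebra.lift_single]

lemma aug_apply (x : MonoidAlgebra (ZMod p) G) :
    augmentation (ZMod p) G x = x.coeff.sum fun _ a => a := by
  simp [augmentation, MonoidAlgebra.lift_apply]

lemma aug_of (g : G) : augmentation (ZMod p) G (MonoidAlgebra.of (ZMod p) G g) = 1 := by
  simp [MonoidAlgebra.of_apply, aug_single]

lemma memI_aux (g : G) :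
    MonoidAlgebra.of (ZMod p) G g - 1 ∈
      (RingHom.ker (augmentation (ZMod p) G)).restrictScalars (ZMod p) := by
  simp only [Submodule.restrictScalars_mem, RingHom.mem_ker, map_sub, map_one, aug_of p g,
    sub_self]

lemma span_I :
    ((RingHom.ker (augmentation (ZMod p) G)).restrictScalars (ZMod p) : Submodule (ZMod p) (MonoidAlgebra (ZMod p) G)) =
      Submodule.span (ZMod p) (Set.range fun g : G => MonoidAlgebra.of (ZMod p) G g - 1) := by
  apply le_antisymm
  · intro x hx
    rw [Submodule.restrictScalars_mem, RingHom.mem_ker] at hx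
    have key : x = ∑ g ∈ x.coeff.support, (x.coeff g) • (MonoidAlgebra.of (ZMod p) G g - 1) := by
      have h1 : ∑ g ∈ x.coeff.support, (x.coeff g) • (MonoidAlgebra.of (ZMod p) G g : MonoidAlgebra (ZMod p) G)
          = x := by
        simp only [show ∀ g : G, (x.coeff g) • (MonoidAlgebra.of (ZMod p) G g : MonoidAlgebra (ZMod p) G)
            = MonoidAlgebra.single g (x.coeff g) from fun g => by
          rw [MonoidAlgebra.of_apply, MonoidAlgebra.smul_single', mul_one]]
        exact MonoidAlgebra.sum_coeff_single x
      have h2 : ∑ g ∈ x.coeff.support, (x.coeff g) • (1 : MonoidAlgebra (ZMod p) G) = 0 := by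
        rw [← Finset.sum_smul]
        have hs : (∑ i ∈ x.coeff.support, x.coeff i) = 0 := by rw [aug_apply] at hx; exact hx
        rw [hs, zero_smul]
      calc x = ∑ g ∈ x.coeff.support, (x.coeff g) • (MonoidAlgebra.of (ZMod p) G g : MonoidAlgebra (ZMod p) G)
              - ∑ g ∈ x.coeff.support, (x.coeff g) • (1 : MonoidAlgebra (ZMod p) G) := by rw [h1, h2, sub_zero]
        _ = _ := by rw [← Finset.sum_sub_distrib]; exact Finset.sum_congr rfl fun g _ => (smul_sub _ _ _).symm
    rw [key]
    exact Submodule.sum_mem _ fun g _ =>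
      Submodule.smul_mem _ _ (Submodule.subset_span ⟨g, rfl⟩)
  · rw [Submodule.span_le]
    rintro _ ⟨g, rfl⟩
    exact memI_aux p g

end AuxAlg

section Psi
variable (p : ℕ) [Fact p.Prime] {G : Type*} [Group G] {V : Type*} [AddCommGroup V]
  [Module (ZMod p) V] (v : G → V)

noncomputable def psiL : MonoidAlgebra (ZMod p) G →ₗ[ZMod p] V :=
  (Finsupp.linearCombination (ZMod p) v).comp (MonoidAlgebra.coeffLinearEquiv (ZMod p)).toLinearMap

lemma psiL_single (g : G) (a : ZMod p) : psiL p v (MonoidAlgebra.single g a) = a • v g :=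
  Finsupp.linearCombination_single _ _ _

variable (hv : ∀ a b : G, v (a * b) = v a + v b)
include hv

lemma psiL_mul (x y : MonoidAlgebra (ZMod p) G) :
    psiL p v (x * y) = augmentation (ZMod p) G y • psiL p v x
      + augmentation (ZMod p) G x • psiL p v y := by
  induction x using MonoidAlgebra.induction_linear with
  | zero => simp
  | add f₁ f₂ h₁ h₂ =>
    rw [add_mul, map_add, map_add (augmentation (ZMod p) G), map_add (psiL p v), h₁, h₂,
      smul_add, add_smul]
    abel
  | single gx a =>
    induction y using MonoidAlgebra.induction_linear with
    | zero => simp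
    | add f₁ f₂ h₁ h₂ =>
      rw [mul_add, map_add, map_add (augmentation (ZMod p) G), map_add (psiL p v), h₁, h₂,
        smul_add, add_smul]
      abel
    | single gy b =>
      rw [MonoidAlgebra.single_mul_single, psiL_single, psiL_single, psiL_single,
        aug_single, aug_single, hv, smul_add, smul_smul, smul_smul, mul_comm a b]

lemma aux_key (g : G)
    (h0 : (Submodule.Quotient.mk
        (⟨MonoidAlgebra.of (ZMod p) G g - 1, memI_aux p g⟩ :
          ((RingHom.ker (augmentation (ZMod p) G)).restrictScalars (ZMod p))) :
        _ ⧸ ((((RingHom.ker (augmentation (ZMod p) G)).restrictScalars (ZMod p)) *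
            (((RingHom.ker (augmentation (ZMod p) G)).restrictScalars (ZMod p)))).comap
          ((RingHom.ker (augmentation (ZMod p) G)).restrictScalars (ZMod p)).subtype)) = 0) :
    v g = 0 := by
  set I₀ := (RingHom.ker (augmentation (ZMod p) G)).restrictScalars (ZMod p) with hI₀
  have hv1 : v 1 = 0 := by
    have := hv 1 1
    rw [one_mul] at this
    exact (left_eq_add.mp this)
  have hker : (I₀ * I₀).comap I₀.subtype ≤ LinearMap.ker ((psiL p v).comp I₀.subtype) := by
    intro x hx
    rw [Submodule.mem_comap] at hx
    rw [LinearMap.mem_ker, LinearMap.comp_apply]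
    revert hx
    have : ∀ y ∈ I₀ * I₀, psiL p v y = 0 := by
      intro y hy
      refine Submodule.mul_induction_on hy (fun a ha b hb => ?_) (fun a b ha hb => ?_)
      · rw [psiL_mul p v hv]
        rw [Submodule.restrictScalars_mem, RingHom.mem_ker] at ha hb
        rw [ha, hb, zero_smul, zero_smul, add_zero]
      · rw [map_add, ha, hb, add_zero]
    exact fun hx => this _ hx
  let ψbar := Submodule.liftQ _ ((psiL p v).comp I₀.subtype) hker
  have := congrArg ψbar h0
  rw [map_zero] at this
  rw [Submodule.liftQ_apply, LinearMap.comp_apply] at this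
  have heval : psiL p v (MonoidAlgebra.of (ZMod p) G g - 1) = v g := by
    rw [map_sub]
    have h1 : (1 : MonoidAlgebra (ZMod p) G) = MonoidAlgebra.single 1 1 := rfl
    rw [MonoidAlgebra.of_apply, psiL_single, h1, psiL_single, one_smul, one_smul, hv1, sub_zero]
  rw [Submodule.subtype_apply] at this
  exact heval.symm.trans this
end Psi

set_option maxHeartbeats 1000000 in
/-- For a finite `p`-group `G` and `k = F_p`, the map
`g·Φ(G) ↦ (g − 1) + I(G)²` defines a group isomorphism from `G/Φ(G)` onto the additive
group `I(G)/I(G)²`. -/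
theorem stmt16 (p : ℕ) [Fact p.Prime]
    (G : Type*) [Group G] [Finite G] (hG : IsPGroup p G)
    (I : Submodule (ZMod p) (MonoidAlgebra (ZMod p) G))
    (hI : I = (RingHom.ker (augmentation (ZMod p) G)).restrictScalars (ZMod p)) :
    ∃ e : (G ⧸ frattini G) ≃* Multiplicative (↥I ⧸ ((I * I).comap I.subtype)),
      ∀ (g : G) (hg : MonoidAlgebra.of (ZMod p) G g - 1 ∈ I),
        e (QuotientGroup.mk g) =
          Multiplicative.ofAdd (Submodule.Quotient.mk
            (⟨MonoidAlgebra.of (ZMod p) G g - 1, hg⟩ : I)) := by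
  classical
  subst hI
  set I : Submodule (ZMod p) (MonoidAlgebra (ZMod p) G) :=
    (RingHom.ker (augmentation (ZMod p) G)).restrictScalars (ZMod p) with hI
  set J : Submodule (ZMod p) I := (I * I).comap I.subtype with hJ
  have memI : ∀ g : G, MonoidAlgebra.of (ZMod p) G g - 1 ∈ I := memI_aux p
  -- the homomorphism φ : G →* Multiplicative (I ⧸ J)
  let φ : G →* Multiplicative (I ⧸ J) :=
    { toFun := fun g => Multiplicative.ofAdd
        (Submodule.Quotient.mk (⟨MonoidAlgebra.of (ZMod p) G g - 1, memI g⟩ : I)),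
      map_one' := by
        have h0 : (⟨MonoidAlgebra.of (ZMod p) G 1 - 1, memI 1⟩ : I) = 0 :=
          Subtype.ext (by simp [MonoidAlgebra.one_def])
        show Multiplicative.ofAdd
          (Submodule.Quotient.mk (⟨MonoidAlgebra.of (ZMod p) G 1 - 1, memI 1⟩ : I)) = 1
        rw [h0, Submodule.Quotient.mk_zero]
        rfl,
      map_mul' := by
        intro g h
        rw [← ofAdd_add]
        refine congrArg Multiplicative.ofAdd ?_
        rw [← Submodule.Quotient.mk_add, Submodule.Quotient.eq]
        rw [hJ, Submodule.mem_comap]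
        have hval : ((⟨MonoidAlgebra.of (ZMod p) G (g * h) - 1, memI (g * h)⟩ : I) -
            ((⟨MonoidAlgebra.of (ZMod p) G g - 1, memI g⟩ : I) +
             (⟨MonoidAlgebra.of (ZMod p) G h - 1, memI h⟩ : I)) : I).val =
            (MonoidAlgebra.of (ZMod p) G g - 1) * (MonoidAlgebra.of (ZMod p) G h - 1) := by
          show (MonoidAlgebra.of (ZMod p) G (g * h) - 1) -
            ((MonoidAlgebra.of (ZMod p) G g - 1) + (MonoidAlgebra.of (ZMod p) G h - 1)) = _
          rw [map_mul]
          noncomm_ring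
        rw [Submodule.subtype_apply, hval]
        exact Submodule.mul_mem_mul (memI g) (memI h) }
  have hφ : ∀ g : G, φ g = Multiplicative.ofAdd
      (Submodule.Quotient.mk (⟨MonoidAlgebra.of (ZMod p) G g - 1, memI g⟩ : I)) := fun _ => rfl
  -- kernel of φ is contained in the Frattini subgroup
  have hNle : φ.ker ≤ frattini G := by
    letI : CommGroup (G ⧸ frattini G) :=
      { (inferInstance : Group (G ⧸ frattini G)) with
        mul_comm := fun a b => QuotientGroup.induction_on a fun g =>
          QuotientGroup.induction_on b fun h => by
            rw [← QuotientGroup.mk_mul, ← QuotientGroup.mk_mul, QuotientGroup.eq]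
            have := aux_comm_frattini hG h⁻¹ g⁻¹
            simpa [commutatorElement_def, mul_assoc] using this }
    letI : Module (ZMod p) (Additive (G ⧸ frattini G)) :=
      AddCommGroup.zmodModule (by
        intro x
        have hx : Additive.toMul (p • x) = Additive.toMul x ^ p := rfl
        refine Additive.toMul.injective ?_
        rw [hx]
        refine QuotientGroup.induction_on (Additive.toMul x) fun g => ?_
        rw [← QuotientGroup.mk_pow]
        exact (QuotientGroup.eq_one_iff _).mpr (aux_pow_frattini hG g))
    intro g hg
    rw [MonoidHom.mem_ker, hφ, ofAdd_eq_one] at hg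
    have := aux_key p (V := Additive (G ⧸ frattini G))
      (fun g => Additive.ofMul (QuotientGroup.mk g : G ⧸ frattini G))
      (fun a b => by
        show Additive.ofMul ((QuotientGroup.mk a : G ⧸ frattini G) * QuotientGroup.mk b) = _
        rfl) g hg
    rw [ofMul_eq_zero] at this
    exact (QuotientGroup.eq_one_iff g).mp this
  -- Frattini subgroup is contained in the kernel of φ
  have hleN : frattini G ≤ φ.ker := by
    intro g hg
    rw [MonoidHom.mem_ker, hφ, ofAdd_eq_one]
    haveI hfree : Module.Free (ZMod p) (I ⧸ J) := Module.Free.of_divisionRing (ZMod p) _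
    haveI hproj : Module.Projective (ZMod p) (I ⧸ J) := Module.Projective.of_free
    refine (Module.forall_dual_apply_eq_zero_iff (ZMod p) _).mp fun f => ?_
    by_contra hne
    let χ : G →* Multiplicative (ZMod p) :=
      (AddMonoidHom.toMultiplicative f.toAddMonoidHom).comp φ
    have hχ : ∀ a : G, χ a = Multiplicative.ofAdd
        (f (Submodule.Quotient.mk (⟨MonoidAlgebra.of (ZMod p) G a - 1, memI a⟩ : I))) :=
      fun _ => rfl
    have hgK : g ∉ χ.ker := by
      rw [MonoidHom.mem_ker, hχ, ofAdd_eq_one]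
      exact hne
    have hK : IsCoatom χ.ker := by
      constructor
      · exact fun htop => hgK (htop ▸ mem_top g)
      · intro H hH
        obtain ⟨h₀, hh₀H, hh₀K⟩ := SetLike.exists_of_lt hH
        rw [eq_top_iff]
        intro a _
        have hc : Multiplicative.toAdd (χ h₀) ≠ 0 := by
          intro hc0
          exact hh₀K (MonoidHom.mem_ker.mpr (by
            have : χ h₀ = Multiplicative.ofAdd 0 := by
              rw [← hc0]; rfl
            simpa using this))
        set c := Multiplicative.toAdd (χ h₀) with hcdef
        set d := Multiplicative.toAdd (χ a) with hddef
        set m := (d * c⁻¹).val with hmdef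
        have hm : χ (h₀ ^ m) = χ a := by
          rw [map_pow]
          refine Multiplicative.toAdd.injective ?_
          rw [toAdd_pow, ← hcdef, ← hddef, nsmul_eq_mul, hmdef, ZMod.natCast_val,
            ZMod.cast_id, mul_assoc, inv_mul_cancel₀ hc, mul_one]
        have hmem : a * (h₀ ^ m)⁻¹ ∈ χ.ker := by
          rw [MonoidHom.mem_ker, map_mul, map_inv, hm, mul_inv_cancel]
        have : (a * (h₀ ^ m)⁻¹) * h₀ ^ m ∈ H :=
          H.mul_mem (hH.le hmem) (H.pow_mem hh₀H m)
        simpa using this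
    have hgmem : g ∈ χ.ker := frattini_le_coatom hK hg
    rw [MonoidHom.mem_ker, hχ, ofAdd_eq_one] at hgmem
    exact hne hgmem
  -- φ has full range
  have hrange : φ.range = ⊤ := by
    have hIs : I = Submodule.span (ZMod p)
        (Set.range fun g : G => MonoidAlgebra.of (ZMod p) G g - 1) := span_I p
    have hIspan : ∀ x : I, x ∈ Submodule.span (ZMod p)
        (Set.range fun g : G => (⟨MonoidAlgebra.of (ZMod p) G g - 1, memI g⟩ : I)) := by
      intro x
      have hx : (x : MonoidAlgebra (ZMod p) G) ∈ Submodule.span (ZMod p)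
          (Set.range fun g : G => MonoidAlgebra.of (ZMod p) G g - 1) := hIs ▸ x.2
      refine Submodule.span_induction
        (p := fun y hy => ∀ hyI : y ∈ I, (⟨y, hyI⟩ : I) ∈ Submodule.span (ZMod p)
          (Set.range fun g : G => (⟨MonoidAlgebra.of (ZMod p) G g - 1, memI g⟩ : I)))
        ?_ ?_ ?_ ?_ hx x.2
      · rintro y ⟨g, rfl⟩ hyI
        exact Submodule.subset_span ⟨g, rfl⟩
      · intro h0
        have : (⟨0, h0⟩ : I) = 0 := rfl
        rw [this]
        exact Submodule.zero_mem _
      · intro y z hy hz hys hzs hyz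
        have hyI : y ∈ I := hIs ▸ hy
        have hzI : z ∈ I := hIs ▸ hz
        have : (⟨y + z, hyz⟩ : I) = ⟨y, hyI⟩ + ⟨z, hzI⟩ := rfl
        rw [this]
        exact Submodule.add_mem _ (hys hyI) (hzs hzI)
      · intro a y hy hys hay
        have hyI : y ∈ I := hIs ▸ hy
        have : (⟨a • y, hay⟩ : I) = a • ⟨y, hyI⟩ := rfl
        rw [this]
        exact Submodule.smul_mem _ _ (hys hyI)
    have hQspan : ∀ q : I ⧸ J, q ∈ Submodule.span (ZMod p)
        (Set.range fun g : G =>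
          (Submodule.Quotient.mk (⟨MonoidAlgebra.of (ZMod p) G g - 1, memI g⟩ : I) : I ⧸ J)) := by
      intro q
      obtain ⟨x, rfl⟩ := Submodule.Quotient.mk_surjective J q
      refine Submodule.span_induction
        (p := fun y _ => (Submodule.Quotient.mk y : I ⧸ J) ∈ Submodule.span (ZMod p)
          (Set.range fun g : G =>
            (Submodule.Quotient.mk (⟨MonoidAlgebra.of (ZMod p) G g - 1, memI g⟩ : I) : I ⧸ J)))
        ?_ ?_ ?_ ?_ (hIspan x)
      · rintro y ⟨g, rfl⟩
        exact Submodule.subset_span ⟨g, rfl⟩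
      · show (Submodule.Quotient.mk (0 : I) : I ⧸ J) ∈ _
        rw [Submodule.Quotient.mk_zero]
        exact Submodule.zero_mem _
      · intro y z _ _ hy hz
        show (Submodule.Quotient.mk (y + z) : I ⧸ J) ∈ _
        rw [Submodule.Quotient.mk_add]
        exact Submodule.add_mem _ hy hz
      · intro a y _ hy
        show (Submodule.Quotient.mk (a • y) : I ⧸ J) ∈ _
        rw [Submodule.Quotient.mk_smul]
        exact Submodule.smul_mem _ _ hy
    rw [eq_top_iff]
    intro t _
    have hspan := hQspan (Multiplicative.toAdd t)
    have hfinal : ∀ q : I ⧸ J, q ∈ Submodule.span (ZMod p)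
        (Set.range fun g : G =>
          (Submodule.Quotient.mk (⟨MonoidAlgebra.of (ZMod p) G g - 1, memI g⟩ : I) : I ⧸ J)) →
        Multiplicative.ofAdd q ∈ φ.range := by
      intro q hq
      refine Submodule.span_induction ?_ ?_ ?_ ?_ hq
      · rintro y ⟨g, rfl⟩
        exact ⟨g, rfl⟩
      · exact one_mem _
      · intro y z _ _ hy hz
        rw [ofAdd_add]
        exact mul_mem hy hz
      · intro a y _ hy
        have : a • y = (a.val : ℕ) • y := by
          rw [← Nat.cast_smul_eq_nsmul (ZMod p), ZMod.natCast_val, ZMod.cast_id]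
        rw [this, ofAdd_nsmul]
        exact pow_mem hy _
    have := hfinal _ hspan
    simpa using this
  -- assemble the equivalence
  have hNeq : frattini G = φ.ker := le_antisymm hleN hNle
  refine ⟨(QuotientGroup.quotientMulEquivOfEq hNeq).trans
    ((QuotientGroup.quotientKerEquivRange φ).trans
      ((MulEquiv.subgroupCongr hrange).trans Subgroup.topEquiv)), ?_⟩
  intro g hg
  rfl
end
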